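/- arXiv:1812.02786 — 7 statements merged into one kernel-verified Lean document; each statement's English description precedes it below -/
import Mathlib

section
/- Let p ∈ [1, ∞). If f ∈ L^1(R^d, C), g ∈ L^p(R^d, C), and w: R^d × R^d → C is measurable and bounded, then the weighted cross-correlation f ⋆_w g lies in L^p(R^d, C) and ‖f ⋆_w g‖_{L^p} ≤ ‖w‖_∞ ‖f‖_{L^1} ‖g‖_{L^p}. -/
/-! Bounding the weight pointwise reduces the claim to Young's inequality
`‖∫ |f(y)| |g(· + y)| dy‖_p ≤ ‖f‖₁ ‖g‖_p`. Hölder's inequality for the measure `|f(y)| dy` gives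
`(∫ |f(y)| |g(x + y)| dy)^p ≤ ‖f‖₁^(p-1) ∫ |f(y)| |g(x + y)|^p dy`, and integrating in `x`,
Tonelli and translation invariance of the measure turn the right-hand side into `‖f‖₁^p ‖g‖_p^p`. -/

open MeasureTheory Complex
open scoped ENNReal

/-- Weighted cross-correlation `(f ⋆_w g)(x) = ∫ f*(y) g(x+y) w(x+y, y) dy`. -/
noncomputable def wcc {d : ℕ} (f g : EuclideanSpace ℝ (Fin d) → ℂ)
    (w : EuclideanSpace ℝ (Fin d) → EuclideanSpace ℝ (Fin d) → ℂ)
    (x : EuclideanSpace ℝ (Fin d)) : ℂ :=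
  ∫ y, (starRingEnd ℂ) (f y) * g (x + y) * w (x + y) y

namespace ENNReal

variable {α : Type*} [MeasurableSpace α] {μ : Measure α}

theorem lintegral_mul_rpow_le {a b : α → ℝ≥0∞} (ha : AEMeasurable a μ) (hb : AEMeasurable b μ)
    {p : ℝ} (hp : 1 ≤ p) :
    (∫⁻ x, a x * b x ∂μ) ^ p ≤ (∫⁻ x, a x ∂μ) ^ (p - 1) * ∫⁻ x, a x * b x ^ p ∂μ := by
  have hp0 : 0 < p := zero_lt_one.trans_le hp
  have hexp : (1 - 1 / p) + 1 / p = 1 := by ring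
  -- Hölder for `a ^ (1 - 1/p) * (a * b ^ p) ^ (1/p)`, whose integrand is `a * b`
  have holder := lintegral_mul_norm_pow_le ha (ha.mul (hb.pow_const p))
    (sub_nonneg.2 ((div_le_one hp0).2 hp)) (one_div_nonneg.2 hp0.le) hexp
  have integrand : ∀ x, a x ^ (1 - 1 / p) * (a x * b x ^ p) ^ (1 / p) = a x * b x := fun x => by
    rw [mul_rpow_of_nonneg _ _ (by positivity), ← rpow_mul, mul_one_div_cancel hp0.ne', rpow_one,
      ← mul_assoc, ← rpow_add_of_nonneg _ _ (sub_nonneg.2 ((div_le_one hp0).2 hp))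
        (by positivity), hexp, rpow_one]
  calc (∫⁻ x, a x * b x ∂μ) ^ p
      ≤ ((∫⁻ x, a x ∂μ) ^ (1 - 1 / p) * (∫⁻ x, a x * b x ^ p ∂μ) ^ (1 / p)) ^ p :=
        rpow_le_rpow ((lintegral_congr fun x => (integrand x).symm).trans_le holder) hp0.le
    _ = (∫⁻ x, a x ∂μ) ^ (p - 1) * ∫⁻ x, a x * b x ^ p ∂μ := by
        rw [mul_rpow_of_nonneg _ _ hp0.le, ← rpow_mul, ← rpow_mul, one_div_mul_cancel hp0.ne',
          rpow_one, sub_mul, one_div_mul_cancel hp0.ne', one_mul]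

end ENNReal

section Correlation

variable {G : Type*} [MeasurableSpace G] [AddCommGroup G] [MeasurableAdd₂ G]
  {μ : Measure G} [SFinite μ] [μ.IsAddLeftInvariant]

theorem aemeasurable_mul_comp_add {a c : G → ℝ≥0∞} (ha : AEMeasurable a μ)
    (hc : AEMeasurable c μ) :
    AEMeasurable (fun z : G × G => a z.2 * c (z.1 + z.2)) (μ.prod μ) :=
  (ha.comp_quasiMeasurePreserving Measure.quasiMeasurePreserving_snd).mul
    (hc.comp_quasiMeasurePreserving (quasiMeasurePreserving_add μ μ))

theorem lintegral_lintegral_mul_comp_add {a c : G → ℝ≥0∞} (ha : AEMeasurable a μ)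
    (hc : AEMeasurable c μ) :
    ∫⁻ x, ∫⁻ y, a y * c (x + y) ∂μ ∂μ = (∫⁻ y, a y ∂μ) * ∫⁻ x, c x ∂μ := by
  rw [lintegral_lintegral_swap (aemeasurable_mul_comp_add ha hc)]
  calc ∫⁻ y, ∫⁻ x, a y * c (x + y) ∂μ ∂μ = ∫⁻ y, a y * ∫⁻ x, c x ∂μ ∂μ := by
        refine lintegral_congr fun y => ?_
        have hcy : AEMeasurable (fun x => c (x + y)) μ :=
          hc.comp_quasiMeasurePreserving (measurePreserving_add_right μ y).quasiMeasurePreserving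
        rw [lintegral_const_mul'' _ hcy, lintegral_add_right_eq_self c y]
    _ = (∫⁻ y, a y ∂μ) * ∫⁻ x, c x ∂μ := lintegral_mul_const'' _ ha

theorem eLpNorm_lintegral_enorm_mul_comp_add_le {E F : Type*} [NormedAddCommGroup E]
    [NormedAddCommGroup F] {f : G → E} {g : G → F} (hf : AEStronglyMeasurable f μ)
    (hg : AEStronglyMeasurable g μ) {p : ℝ≥0∞} (hp1 : 1 ≤ p) (hp2 : p ≠ ⊤) :
    eLpNorm (fun x => ∫⁻ y, ‖f y‖ₑ * ‖g (x + y)‖ₑ ∂μ) p μ ≤ eLpNorm f 1 μ * eLpNorm g p μ := by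
  have hp0 : p ≠ 0 := (zero_lt_one.trans_le hp1).ne'
  set r := p.toReal
  have hr : 1 ≤ r := by simpa using ENNReal.toReal_mono hp2 hp1
  have hr0 : 0 < r := zero_lt_one.trans_le hr
  set A := ∫⁻ y, ‖f y‖ₑ ∂μ
  have hf' := hf.enorm
  have hg' := hg.enorm
  have jensen (x : G) : (∫⁻ y, ‖f y‖ₑ * ‖g (x + y)‖ₑ ∂μ) ^ r
      ≤ A ^ (r - 1) * ∫⁻ y, ‖f y‖ₑ * ‖g (x + y)‖ₑ ^ r ∂μ :=
    ENNReal.lintegral_mul_rpow_le hf'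
      (hg'.comp_quasiMeasurePreserving (measurePreserving_add_left μ x).quasiMeasurePreserving) hr
  have young : ∫⁻ x, (∫⁻ y, ‖f y‖ₑ * ‖g (x + y)‖ₑ ∂μ) ^ r ∂μ ≤ A ^ r * ∫⁻ x, ‖g x‖ₑ ^ r ∂μ :=
    calc ∫⁻ x, (∫⁻ y, ‖f y‖ₑ * ‖g (x + y)‖ₑ ∂μ) ^ r ∂μ
        ≤ ∫⁻ x, A ^ (r - 1) * ∫⁻ y, ‖f y‖ₑ * ‖g (x + y)‖ₑ ^ r ∂μ ∂μ := lintegral_mono jensen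
      _ = A ^ (r - 1) * ∫⁻ x, ∫⁻ y, ‖f y‖ₑ * ‖g (x + y)‖ₑ ^ r ∂μ ∂μ :=
        lintegral_const_mul'' _
          (aemeasurable_mul_comp_add hf' (hg'.pow_const r)).lintegral_prod_right'
      _ = A ^ (r - 1) * (A * ∫⁻ x, ‖g x‖ₑ ^ r ∂μ) := by
        rw [lintegral_lintegral_mul_comp_add hf' (hg'.pow_const r)]
      _ = A ^ r * ∫⁻ x, ‖g x‖ₑ ^ r ∂μ := by
        rw [← mul_assoc]
        congr 1
        simpa using (ENNReal.rpow_add_of_nonneg (x := A) (r - 1) 1 (by linarith) zero_le_one).symm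
  rw [eLpNorm_one_eq_lintegral_enorm, eLpNorm_eq_lintegral_rpow_enorm_toReal hp0 hp2,
    eLpNorm_eq_lintegral_rpow_enorm_toReal hp0 hp2]
  simp only [enorm_eq_self]
  calc (∫⁻ x, (∫⁻ y, ‖f y‖ₑ * ‖g (x + y)‖ₑ ∂μ) ^ r ∂μ) ^ (1 / r)
      ≤ (A ^ r * ∫⁻ x, ‖g x‖ₑ ^ r ∂μ) ^ (1 / r) := ENNReal.rpow_le_rpow young (by positivity)
    _ = A * (∫⁻ x, ‖g x‖ₑ ^ r ∂μ) ^ (1 / r) := by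
      rw [ENNReal.mul_rpow_of_nonneg _ _ (by positivity), ← ENNReal.rpow_mul,
        mul_one_div_cancel hr0.ne', ENNReal.rpow_one]

end Correlation

section WeightedCrossCorrelation

variable {d : ℕ} {f g : EuclideanSpace ℝ (Fin d) → ℂ}
  {w : EuclideanSpace ℝ (Fin d) → EuclideanSpace ℝ (Fin d) → ℂ}

theorem aestronglyMeasurable_wcc (hf : AEStronglyMeasurable f volume)
    (hg : AEStronglyMeasurable g volume)
    (hw : Measurable (fun q : EuclideanSpace ℝ (Fin d) × EuclideanSpace ℝ (Fin d) => w q.1 q.2)) :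
    AEStronglyMeasurable (wcc f g w) volume := by
  have hwq : Measurable (fun q : EuclideanSpace ℝ (Fin d) × EuclideanSpace ℝ (Fin d) =>
      w (q.1 + q.2) q.2) :=
    hw.comp ((measurable_fst.add measurable_snd).prodMk measurable_snd)
  exact ((((hf.comp_quasiMeasurePreserving Measure.quasiMeasurePreserving_snd).star).mul
    (hg.comp_quasiMeasurePreserving (quasiMeasurePreserving_add volume volume))).mul
    hwq.aestronglyMeasurable).integral_prod_right'

theorem enorm_wcc_le {C : ℝ} (hC : ∀ x y, ‖w x y‖ ≤ C) (x : EuclideanSpace ℝ (Fin d)) :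
    ‖wcc f g w x‖ₑ ≤ ENNReal.ofReal C * ∫⁻ y, ‖f y‖ₑ * ‖g (x + y)‖ₑ := by
  calc ‖wcc f g w x‖ₑ
      ≤ ∫⁻ y, ‖(starRingEnd ℂ) (f y) * g (x + y) * w (x + y) y‖ₑ :=
        enorm_integral_le_lintegral_enorm _
    _ ≤ ∫⁻ y, ENNReal.ofReal C * (‖f y‖ₑ * ‖g (x + y)‖ₑ) := by
        refine lintegral_mono fun y => ?_
        rw [enorm_mul, enorm_mul, RCLike.enorm_conj, mul_comm]
        gcongr
        exact (ofReal_norm _).symm.trans_le (ENNReal.ofReal_le_ofReal (hC _ _))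
    _ = ENNReal.ofReal C * ∫⁻ y, ‖f y‖ₑ * ‖g (x + y)‖ₑ :=
        lintegral_const_mul' _ _ ENNReal.ofReal_ne_top

end WeightedCrossCorrelation

theorem stmt1 {d : ℕ} (p : ℝ≥0∞) (hp1 : 1 ≤ p) (hp2 : p ≠ ⊤)
    (f g : EuclideanSpace ℝ (Fin d) → ℂ)
    (hf : MemLp f 1 (volume : Measure (EuclideanSpace ℝ (Fin d))))
    (hg : MemLp g p (volume : Measure (EuclideanSpace ℝ (Fin d))))
    (w : EuclideanSpace ℝ (Fin d) → EuclideanSpace ℝ (Fin d) → ℂ)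
    (hw : Measurable (fun q : EuclideanSpace ℝ (Fin d) × EuclideanSpace ℝ (Fin d) => w q.1 q.2))
    (C : ℝ) (hC : ∀ x y, ‖w x y‖ ≤ C) :
    MemLp (wcc f g w) p (volume : Measure (EuclideanSpace ℝ (Fin d))) ∧
    eLpNorm (wcc f g w) p volume ≤
      ENNReal.ofReal C * eLpNorm f 1 volume * eLpNorm g p volume := by
  have bound : eLpNorm (wcc f g w) p volume ≤
      ENNReal.ofReal C * eLpNorm f 1 volume * eLpNorm g p volume :=
    calc eLpNorm (wcc f g w) p volume
        ≤ ENNReal.ofReal C * eLpNorm (fun x => ∫⁻ y, ‖f y‖ₑ * ‖g (x + y)‖ₑ) p volume :=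
          eLpNorm_le_nnreal_smul_eLpNorm_of_ae_le_mul' (ae_of_all _ (enorm_wcc_le hC)) p
      _ ≤ ENNReal.ofReal C * (eLpNorm f 1 volume * eLpNorm g p volume) := by
          gcongr
          exact eLpNorm_lintegral_enorm_mul_comp_add_le hf.1 hg.1 hp1 hp2
      _ = ENNReal.ofReal C * eLpNorm f 1 volume * eLpNorm g p volume := (mul_assoc ..).symm
  exact ⟨⟨aestronglyMeasurable_wcc hf.1 hg.1 hw,
    bound.trans_lt (ENNReal.mul_lt_top (ENNReal.mul_lt_top ENNReal.ofReal_lt_top hf.2) hg.2)⟩,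
    bound⟩
end

section
/- Let U ⊆ R^d be open with boundary of measure zero, f ∈ L^2(U, C), and w: U × U → C a bounded continuous weight with w(y,y) ≥ c for some c > 0 and almost all y ∈ U. Then ‖f ⋆_w f‖_{L^2} = 0 if and only if ‖f‖_{L^2} = 0. -/
open MeasureTheory Complex

/-! The correlation `f ⋆_w f` is continuous: it is the `L²` pairing of `f` with the curve
`x ↦ f(x + ·) w(x + ·, ·)`, which is continuous in `L²` by continuity of translation for the
factor `f` and by dominated convergence for the factor `w`. A continuous function vanishing almost
everywhere vanishes everywhere, and at `0` it equals `∫ |f|² w(y, y)`, whose real part dominates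
`c ‖f‖₂²`. -/

open Filter Topology
open scoped ENNReal InnerProductSpace ComplexConjugate

theorem ContinuousOn.measurable_of_eqOn_compl_zero {X E : Type*} [TopologicalSpace X]
    [MeasurableSpace X] [OpensMeasurableSpace X] [TopologicalSpace E] [MeasurableSpace E]
    [BorelSpace E] [Zero E] {g : X → E} {s : Set X} (hg : ContinuousOn g s) (hs : IsOpen s)
    (h0 : Set.EqOn g 0 sᶜ) : Measurable g := by
  classical
  have hpw : s.piecewise g 0 = g := by
    ext x
    by_cases hx : x ∈ s
    · simp [hx]
    · simp [hx, h0 hx]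
  rw [← hpw]
  exact hg.measurable_piecewise continuousOn_const hs.measurableSet

theorem tendsto_eLpNorm_of_dominated {α E ι : Type*} [MeasurableSpace α] {μ : Measure α}
    [NormedAddCommGroup E] {l : Filter ι} [l.IsCountablyGenerated] {p : ℝ≥0∞} (hp0 : p ≠ 0)
    (hp : p ≠ ∞) {F : ι → α → E} {bound : α → ℝ}
    (hF_meas : ∀ᶠ i in l, AEStronglyMeasurable (F i) μ)
    (h_bound : ∀ᶠ i in l, ∀ᵐ a ∂μ, ‖F i a‖ ≤ bound a) (hbound : MemLp bound p μ)
    (h_lim : ∀ᵐ a ∂μ, Tendsto (fun i => F i a) l (𝓝 0)) :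
    Tendsto (fun i => eLpNorm (F i) p μ) l (𝓝 0) := by
  have hp' : 0 < p.toReal := ENNReal.toReal_pos hp0 hp
  simp_rw [eLpNorm_eq_lintegral_rpow_enorm_toReal hp0 hp]
  have hint : Tendsto (fun i => ∫⁻ a, ‖F i a‖ₑ ^ p.toReal ∂μ) l (𝓝 0) := by
    simpa using tendsto_lintegral_filter_of_dominated_convergence' (f := 0)
      (fun a => ‖bound a‖ₑ ^ p.toReal)
      (hF_meas.mono fun i hi => hi.enorm.pow_const _)
      (h_bound.mono fun i hi => hi.mono fun a ha => by
        gcongr; exact enorm_le_iff_norm_le.2 (ha.trans (Real.le_norm_self _)))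
      (lintegral_rpow_enorm_lt_top_of_eLpNorm_lt_top hp0 hp hbound.eLpNorm_lt_top).ne
      (h_lim.mono fun a ha => by
        simpa [hp', Function.comp_def] using
          ((ENNReal.continuous_rpow_const (y := p.toReal)).comp continuous_enorm
            |>.tendsto 0).comp ha)
  simpa [hp', Function.comp_def] using
    ((ENNReal.continuous_rpow_const (y := 1 / p.toReal)).tendsto 0).comp hint

theorem tendsto_eLpNorm_comp_add_left_sub {G E : Type*} [AddGroup G] [TopologicalSpace G]
    [IsTopologicalAddGroup G] [MeasurableSpace G] [BorelSpace G] {μ : Measure G}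
    [μ.IsAddLeftInvariant] [μ.InnerRegularCompactLTTop] [IsLocallyFiniteMeasure μ]
    [NormedAddCommGroup E] {p : ℝ≥0∞} [Fact (1 ≤ p)] (hp : p ≠ ∞) {f : G → E} (hf : MemLp f p μ)
    (x₀ : G) :
    Tendsto (fun x => eLpNorm (fun y => f (x + y) - f (x₀ + y)) p μ) (𝓝 x₀) (𝓝 0) := by
  let τ : G → C(G, G) := fun x => ⟨(x + ·), by fun_prop⟩
  have hτ : Continuous τ :=
    ContinuousMap.continuous_of_continuous_uncurry _ (continuous_fst.add continuous_snd)
  have mp (x : G) : MeasurePreserving (τ x) μ μ := measurePreserving_add_left μ x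
  let T : G → Lp E p μ := fun x => Lp.compMeasurePreserving (τ x) (mp x) (hf.toLp f)
  have hT : Continuous T := Continuous.compMeasurePreservingLp continuous_const hτ mp hp
  have hTf (x : G) : (T x : G → E) =ᵐ[μ] fun y => f (x + y) :=
    (Lp.coeFn_compMeasurePreserving _ (mp x)).trans
      ((mp x).quasiMeasurePreserving.ae_eq_comp hf.coeFn_toLp)
  refine ((Lp.tendsto_Lp_iff_tendsto_eLpNorm' T (T x₀)).1 (hT.tendsto x₀)).congr fun x => ?_
  exact eLpNorm_congr_ae ((hTf x).sub (hTf x₀))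

def weightedTranslate {G : Type*} [Add G] (f : G → ℂ) (w : G → G → ℂ) (x y : G) : ℂ :=
  f (x + y) * w (x + y) y

section WeightedTranslate

variable {G : Type*} [Add G] {U : Set G} {f : G → ℂ} {w : G → G → ℂ} {C : ℝ} {p : ℝ≥0∞}

theorem tendsto_mul_weight_add_sub [TopologicalSpace G] [ContinuousAdd G] (hUo : IsOpen U)
    (hfU : ∀ x, x ∉ U → f x = 0) (hwc : ContinuousOn (fun z : G × G => w z.1 z.2) (U ×ˢ U))
    (hwU : ∀ x y, x ∉ U ∨ y ∉ U → w x y = 0) (x₀ y : G) :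
    Tendsto (fun x => f (x₀ + y) * (w (x + y) y - w (x₀ + y) y)) (𝓝 x₀) (𝓝 0) := by
  by_cases hx₀y : x₀ + y ∈ U
  swap
  · simp [hfU _ hx₀y]
  by_cases hy : y ∈ U
  swap
  · simp [hwU _ _ (Or.inr hy)]
  have hw : Tendsto (fun x => w (x + y) y) (𝓝 x₀) (𝓝 (w (x₀ + y) y)) :=
    ((hwc.continuousAt ((hUo.prod hUo).mem_nhds ⟨hx₀y, hy⟩)).comp
      (f := fun x => (x + y, y)) (by fun_prop)).tendsto
  simpa using (hw.sub_const (w (x₀ + y) y)).const_mul (f (x₀ + y))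

theorem measurable_weight_add_left [MeasurableSpace G] [MeasurableAdd G]
    (hwm : Measurable (fun z : G × G => w z.1 z.2)) (x : G) :
    Measurable fun y => w (x + y) y :=
  hwm.comp ((measurable_const_add x).prodMk measurable_id)

theorem memLp_weightedTranslate [MeasurableSpace G] [MeasurableAdd G] {μ : Measure G}
    [μ.IsAddLeftInvariant] (hf : MemLp f p μ) (hwm : Measurable (fun z : G × G => w z.1 z.2))
    (hC : ∀ x y, ‖w x y‖ ≤ C) (x : G) : MemLp (weightedTranslate f w x) p μ := by
  have hfx := hf.comp_measurePreserving (measurePreserving_add_left μ x)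
  refine hfx.of_le_mul (c := C)
    (hfx.1.mul (measurable_weight_add_left hwm x).aestronglyMeasurable) (ae_of_all _ fun y => ?_)
  rw [weightedTranslate, norm_mul, mul_comm]
  exact mul_le_mul_of_nonneg_right (hC _ _) (norm_nonneg _)

theorem tendsto_eLpNorm_mul_weight_add_sub [TopologicalSpace G] [ContinuousAdd G]
    [FirstCountableTopology G] [MeasurableSpace G] [BorelSpace G] {μ : Measure G}
    [μ.IsAddLeftInvariant] (hp0 : p ≠ 0) (hp : p ≠ ∞) (hf : MemLp f p μ)
    (hUo : IsOpen U) (hfU : ∀ x, x ∉ U → f x = 0)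
    (hwc : ContinuousOn (fun z : G × G => w z.1 z.2) (U ×ˢ U))
    (hwU : ∀ x y, x ∉ U ∨ y ∉ U → w x y = 0) (hwm : Measurable (fun z : G × G => w z.1 z.2))
    (hC : ∀ x y, ‖w x y‖ ≤ C) (x₀ : G) :
    Tendsto (fun x => eLpNorm (fun y => f (x₀ + y) * (w (x + y) y - w (x₀ + y) y)) p μ)
      (𝓝 x₀) (𝓝 0) := by
  have hf₀ := hf.comp_measurePreserving (measurePreserving_add_left μ x₀)
  refine tendsto_eLpNorm_of_dominated hp0 hp (bound := fun y => 2 * C * ‖f (x₀ + y)‖)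
    (Eventually.of_forall fun x => hf₀.1.mul
      ((measurable_weight_add_left hwm x).sub
        (measurable_weight_add_left hwm x₀)).aestronglyMeasurable)
    (Eventually.of_forall fun x => ae_of_all _ fun y => ?_) (hf₀.norm.const_mul _)
    (ae_of_all _ (tendsto_mul_weight_add_sub hUo hfU hwc hwU x₀))
  rw [norm_mul, mul_comm]
  gcongr
  calc ‖w (x + y) y - w (x₀ + y) y‖ ≤ ‖w (x + y) y‖ + ‖w (x₀ + y) y‖ := norm_sub_le _ _
    _ ≤ 2 * C := by linarith [hC (x + y) y, hC (x₀ + y) y]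

end WeightedTranslate

theorem tendsto_eLpNorm_weightedTranslate_sub {G : Type*} [AddGroup G] [TopologicalSpace G]
    [IsTopologicalAddGroup G] [FirstCountableTopology G] [MeasurableSpace G] [BorelSpace G]
    {μ : Measure G} [μ.IsAddLeftInvariant] [μ.InnerRegularCompactLTTop]
    [IsLocallyFiniteMeasure μ] {p : ℝ≥0∞} [Fact (1 ≤ p)] {U : Set G} {f : G → ℂ}
    {w : G → G → ℂ} {C : ℝ} (hp : p ≠ ∞) (hf : MemLp f p μ)
    (hUo : IsOpen U) (hfU : ∀ x, x ∉ U → f x = 0)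
    (hwc : ContinuousOn (fun z : G × G => w z.1 z.2) (U ×ˢ U))
    (hwU : ∀ x y, x ∉ U ∨ y ∉ U → w x y = 0) (hwm : Measurable (fun z : G × G => w z.1 z.2))
    (hC : ∀ x y, ‖w x y‖ ≤ C) (x₀ : G) :
    Tendsto (fun x => eLpNorm (weightedTranslate f w x - weightedTranslate f w x₀) p μ)
      (𝓝 x₀) (𝓝 0) := by
  have hp0 : p ≠ 0 := (one_pos.trans_le Fact.out).ne'
  have hτf (x : G) := hf.comp_measurePreserving (measurePreserving_add_left μ x)
  have hsplit (x : G) : weightedTranslate f w x - weightedTranslate f w x₀ =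
      (fun y => (f (x + y) - f (x₀ + y)) * w (x + y) y) +
        fun y => f (x₀ + y) * (w (x + y) y - w (x₀ + y) y) := by
    ext y
    simp only [weightedTranslate, Pi.sub_apply, Pi.add_apply]
    ring
  have hbound (x : G) : eLpNorm (weightedTranslate f w x - weightedTranslate f w x₀) p μ ≤
      ENNReal.ofReal C * eLpNorm (fun y => f (x + y) - f (x₀ + y)) p μ +
        eLpNorm (fun y => f (x₀ + y) * (w (x + y) y - w (x₀ + y) y)) p μ := by
    rw [hsplit]
    refine (eLpNorm_add_le ?_ ?_ Fact.out).trans (add_le_add_left ?_ _)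
    · exact ((hτf x).1.sub (hτf x₀).1).mul (measurable_weight_add_left hwm x).aestronglyMeasurable
    · exact (hτf x₀).1.mul ((measurable_weight_add_left hwm x).sub
        (measurable_weight_add_left hwm x₀)).aestronglyMeasurable
    refine eLpNorm_le_mul_eLpNorm_of_ae_le_mul (ae_of_all _ fun y => ?_) p
    rw [norm_mul, mul_comm]
    exact mul_le_mul_of_nonneg_right (hC _ _) (norm_nonneg _)
  have hlim := (ENNReal.Tendsto.const_mul (a := ENNReal.ofReal C)
    (tendsto_eLpNorm_comp_add_left_sub hp hf x₀) (Or.inr ENNReal.ofReal_ne_top)).add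
    (tendsto_eLpNorm_mul_weight_add_sub hp0 hp hf hUo hfU hwc hwU hwm hC x₀)
  rw [mul_zero, add_zero] at hlim
  exact tendsto_of_tendsto_of_tendsto_of_le_of_le tendsto_const_nhds hlim (fun _ => zero_le)
    hbound

theorem ae_eq_zero_of_integral_conj_mul_self_mul_eq_zero {α : Type*} [MeasurableSpace α]
    {μ : Measure α} {f v : α → ℂ} (hint : Integrable (fun y => conj (f y) * f y * v y) μ)
    (hv : ∀ᵐ y ∂μ, f y ≠ 0 → 0 < (v y).re) (h0 : ∫ y, conj (f y) * f y * v y ∂μ = 0) :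
    f =ᵐ[μ] 0 := by
  have hre (y : α) : (conj (f y) * f y * v y).re = ‖f y‖ ^ 2 * (v y).re := by
    rw [conj_mul', ← ofReal_pow, re_ofReal_mul]
  have hnonneg : 0 ≤ᵐ[μ] fun y => ‖f y‖ ^ 2 * (v y).re := by
    filter_upwards [hv] with y hy
    by_cases hfy : f y = 0
    · simp [hfy]
    · exact mul_nonneg (sq_nonneg _) (hy hfy).le
  have hzero : (fun y => ‖f y‖ ^ 2 * (v y).re) =ᵐ[μ] 0 := by
    refine (integral_eq_zero_iff_of_nonneg_ae hnonneg
      (by simpa only [RCLike.re_to_complex, hre] using hint.re)).1 ?_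
    simpa only [RCLike.re_to_complex, hre, h0, zero_re] using integral_re hint
  filter_upwards [hv, hzero] with y hy hy0
  by_contra hfy
  exact (mul_pos (pow_pos (norm_pos_iff.2 hfy) 2) (hy hfy)).ne' hy0

section Correlation

variable {d : ℕ}

local notation "𝔼" => EuclideanSpace ℝ (Fin d)

theorem wcc_eq_zero_of_ae_eq_zero {f : 𝔼 → ℂ} (hf : f =ᵐ[volume] 0) (g : 𝔼 → ℂ)
    (w : 𝔼 → 𝔼 → ℂ) : wcc f g w = 0 := by
  ext x
  refine integral_eq_zero_of_ae ?_
  filter_upwards [hf] with y hy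
  simp [hy]

theorem continuous_wcc {U : Set 𝔼} (hUo : IsOpen U) {f : 𝔼 → ℂ} (hf : MemLp f 2 volume)
    (hfU : ∀ x, x ∉ U → f x = 0) {w : 𝔼 → 𝔼 → ℂ}
    (hwc : ContinuousOn (fun z : 𝔼 × 𝔼 => w z.1 z.2) (U ×ˢ U))
    (hwU : ∀ x y, x ∉ U ∨ y ∉ U → w x y = 0) (hwm : Measurable (fun z : 𝔼 × 𝔼 => w z.1 z.2))
    {C : ℝ} (hC : ∀ x y, ‖w x y‖ ≤ C) : Continuous (wcc f f w) := by
  have hG := memLp_weightedTranslate hf hwm hC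
  have hcont : Continuous fun x => (hG x).toLp (weightedTranslate f w x) :=
    continuous_iff_continuousAt.2 fun x₀ =>
      (Lp.tendsto_Lp_iff_tendsto_eLpNorm'' _ hG _ (hG x₀)).2
        (tendsto_eLpNorm_weightedTranslate_sub ENNReal.ofNat_ne_top hf hUo hfU hwc hwU hwm hC x₀)
  have hwcc : wcc f f w = fun x => ⟪hf.toLp f, (hG x).toLp (weightedTranslate f w x)⟫_ℂ := by
    ext x
    rw [L2.inner_def]
    refine integral_congr_ae ?_
    filter_upwards [hf.coeFn_toLp, (hG x).coeFn_toLp] with y hy hy'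
    simp only [hy, hy', weightedTranslate, RCLike.inner_apply]
    ring
  rw [hwcc]
  exact continuous_const.inner hcont

end Correlation

theorem stmt6_general {d : ℕ} (U : Set (EuclideanSpace ℝ (Fin d)))
    (hUo : IsOpen U)
    (f : EuclideanSpace ℝ (Fin d) → ℂ)
    (hf : MemLp f 2 (volume : Measure (EuclideanSpace ℝ (Fin d))))
    (hfU : ∀ x, x ∉ U → f x = 0)
    (w : EuclideanSpace ℝ (Fin d) → EuclideanSpace ℝ (Fin d) → ℂ)
    (hwc : ContinuousOn (fun z : EuclideanSpace ℝ (Fin d) × EuclideanSpace ℝ (Fin d) => w z.1 z.2)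
      (U ×ˢ U))
    (C : ℝ) (hC : ∀ x y, ‖w x y‖ ≤ C)
    (hwU : ∀ x y, x ∉ U ∨ y ∉ U → w x y = 0)
    (c : ℝ) (hc : 0 < c)
    (hdiag : ∀ᵐ y ∂(volume : Measure (EuclideanSpace ℝ (Fin d))),
      y ∈ U → c ≤ (w y y).re ∧ (w y y).im = 0) :
    eLpNorm (wcc f f w) 2 volume = 0 ↔ eLpNorm f 2 volume = 0 := by
  rw [eLpNorm_eq_zero_iff hf.1 two_ne_zero]
  have hwm : Measurable
      (fun z : EuclideanSpace ℝ (Fin d) × EuclideanSpace ℝ (Fin d) => w z.1 z.2) :=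
    hwc.measurable_of_eqOn_compl_zero (hUo.prod hUo) fun z hz => hwU _ _ (not_and_or.1 hz)
  constructor
  · intro h
    have hcont := continuous_wcc hUo hf hfU hwc hwU hwm hC
    have hwcc : wcc f f w = 0 := (hcont.ae_eq_iff_eq volume continuous_const).1
      ((eLpNorm_eq_zero_iff hcont.aestronglyMeasurable two_ne_zero).1 h)
    refine ae_eq_zero_of_integral_conj_mul_self_mul_eq_zero (v := fun y => w y y) ?_ ?_
      (by simpa [wcc] using congrFun hwcc 0)
    · exact (hf.star.integrable_mul (memLp_weightedTranslate hf hwm hC 0)).congr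
        (ae_of_all _ fun y => by simp [weightedTranslate, mul_assoc])
    · filter_upwards [hdiag] with y hy hfy
      exact hc.trans_le (hy (by_contra fun hyU => hfy (hfU y hyU))).1
  · intro h
    rw [wcc_eq_zero_of_ae_eq_zero h, eLpNorm_zero]

theorem stmt6 {d : ℕ} (U : Set (EuclideanSpace ℝ (Fin d)))
    (hUo : IsOpen U) (hUfr : volume (frontier U) = 0)
    (f : EuclideanSpace ℝ (Fin d) → ℂ)
    (hf : MemLp f 2 (volume : Measure (EuclideanSpace ℝ (Fin d))))
    (hfU : ∀ x, x ∉ U → f x = 0)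
    (w : EuclideanSpace ℝ (Fin d) → EuclideanSpace ℝ (Fin d) → ℂ)
    (hwc : ContinuousOn (fun z : EuclideanSpace ℝ (Fin d) × EuclideanSpace ℝ (Fin d) => w z.1 z.2)
      (U ×ˢ U))
    (C : ℝ) (hC : ∀ x y, ‖w x y‖ ≤ C)
    (hwU : ∀ x y, x ∉ U ∨ y ∉ U → w x y = 0)
    (c : ℝ) (hc : 0 < c)
    (hdiag : ∀ᵐ y ∂(volume : Measure (EuclideanSpace ℝ (Fin d))),
      y ∈ U → c ≤ (w y y).re ∧ (w y y).im = 0) :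
    eLpNorm (wcc f f w) 2 volume = 0 ↔ eLpNorm f 2 volume = 0 :=
  stmt6_general U hUo f hf hfU w hwc C hC hwU c hc hdiag
end

section
/- Let U ⊆ R^d be bounded, f ∈ L^2(R^d, C) with support in U, and let w be a weight on U × U that is a uniform limit of finite sums w_N(x,y) = Σ_{j=1}^N v_{j,N}(x) v_{j,N}*(y) with v_{j,N} measurable and bounded, and satisfying w*(x,y) = w(y,x). Then the inverse Fourier transform of f ⋆_w f is real-valued and nonnegative almost everywhere. -/
/-!
Fubini and the shear `(x, y) ↦ (x + y, y)` turn `𝓕⁻ (f ⋆_w f) ξ` into the Hermitian form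
`∬ h u · h*(y) · w u y` of the modulated function `h u = e^{2πi⟪u, ξ⟫} f u`. For a factorized
weight `Σ v_j ⊗ v_j*` this form equals `Σ |∫ h v_j|² ≥ 0`, and it moves by at most `ε ‖f‖₁²`
when the weight moves by `ε` uniformly, so nonnegativity passes to uniform limits. Finally `f`
is integrable, being square integrable with bounded support.
-/

open MeasureTheory Complex
open scoped FourierTransform

/-- The class `W⁺(U)`: bounded measurable weights supported in `U × U` that are uniform
limits of finite sums of factorized terms `v_j(x) v_j*(y)` with `v_j` bounded measurable. -/
def IsWPlus {d : ℕ} (U : Set (EuclideanSpace ℝ (Fin d)))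
    (w : EuclideanSpace ℝ (Fin d) → EuclideanSpace ℝ (Fin d) → ℂ) : Prop :=
  Measurable (fun q : EuclideanSpace ℝ (Fin d) × EuclideanSpace ℝ (Fin d) => w q.1 q.2) ∧
  (∃ C : ℝ, ∀ x y, ‖w x y‖ ≤ C) ∧
  (∀ x y, x ∉ U ∨ y ∉ U → w x y = 0) ∧
  ∀ ε : ℝ, 0 < ε → ∃ (N : ℕ) (v : Fin N → EuclideanSpace ℝ (Fin d) → ℂ),
    (∀ j, Measurable (v j) ∧ (∃ C : ℝ, ∀ x, ‖v j x‖ ≤ C) ∧ (∀ x, x ∉ U → v j x = 0)) ∧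
    ∀ x y, ‖w x y - ∑ j, v j x * (starRingEnd ℂ) (v j y)‖ ≤ ε

open ComplexConjugate
open scoped ComplexOrder RealInnerProductSpace

theorem MeasureTheory.Integrable.conj {α : Type*} [MeasurableSpace α] {μ : Measure α}
    {f : α → ℂ} (hf : Integrable f μ) : Integrable (fun x => conj (f x)) μ :=
  conjCLE.toContinuousLinearMap.integrable_comp hf

theorem MeasureTheory.MemLp.integrable_of_support_subset_isBounded {α β : Type*}
    [MeasurableSpace α] [PseudoMetricSpace α] [ProperSpace α] {μ : Measure α}
    [IsFiniteMeasureOnCompacts μ] [NormedAddCommGroup β] {p : ENNReal} {f : α → β} {U : Set α}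
    (hf : MemLp f p μ) (hp : 1 ≤ p) (hU : Bornology.IsBounded U)
    (hfU : Function.support f ⊆ U) : Integrable f μ :=
  have : IsFiniteMeasure (μ.restrict U) := isFiniteMeasure_restrict.2 hU.measure_lt_top.ne
  (integrableOn_iff_integrable_of_support_subset hfU).1 ((hf.restrict U).integrable hp)

theorem mul_conj_mul_sum_mul_conj {R ι : Type*} [CommSemiring R] [StarRing R] (s : Finset ι)
    (a b : R) (v w : ι → R) :
    a * conj b * ∑ j ∈ s, v j * conj (w j) = ∑ j ∈ s, a * v j * conj (b * w j) := by
  rw [Finset.mul_sum]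
  refine Finset.sum_congr rfl fun j _ => ?_
  rw [map_mul]
  ring

section HermitianForm

variable {α : Type*} [MeasurableSpace α] {μ : Measure α} {h : α → ℂ}

theorem integrable_prod_mul_conj (hh : Integrable h μ) :
    Integrable (fun z : α × α => h z.1 * conj (h z.2)) (μ.prod μ) :=
  hh.mul_prod hh.conj

theorem integrable_prod_mul_conj_mul {w : α → α → ℂ} {C : ℝ} (hh : Integrable h μ)
    (hw : AEStronglyMeasurable (fun z : α × α => w z.1 z.2) (μ.prod μ))
    (hC : ∀ x y, ‖w x y‖ ≤ C) :
    Integrable (fun z : α × α => h z.1 * conj (h z.2) * w z.1 z.2) (μ.prod μ) :=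
  (integrable_prod_mul_conj hh).mul_bdd hw (ae_of_all _ fun z => hC z.1 z.2)

variable [SFinite μ]

theorem integral_prod_mul_conj_mul_sum {ι : Type*} (s : Finset ι) {v : ι → α → ℂ}
    (hv : ∀ j ∈ s, Integrable (fun x => h x * v j x) μ) :
    ∫ z, h z.1 * conj (h z.2) * ∑ j ∈ s, v j z.1 * conj (v j z.2) ∂μ.prod μ
      = ((∑ j ∈ s, ‖∫ x, h x * v j x ∂μ‖ ^ 2 : ℝ) : ℂ) := by
  simp_rw [mul_conj_mul_sum_mul_conj]
  rw [integral_finsetSum _ fun j hj => integrable_prod_mul_conj (hv j hj)]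
  push_cast
  refine Finset.sum_congr rfl fun j _ => ?_
  rw [integral_prod_mul (fun x => h x * v j x) (fun y => conj (h y * v j y)), integral_conj,
    mul_conj']

theorem norm_integral_prod_mul_conj_mul_sub_le {w w' : α → α → ℂ} {ε : ℝ} (hh : Integrable h μ)
    (hw : Integrable (fun z : α × α => h z.1 * conj (h z.2) * w z.1 z.2) (μ.prod μ))
    (hw' : Integrable (fun z : α × α => h z.1 * conj (h z.2) * w' z.1 z.2) (μ.prod μ))
    (hε : ∀ x y, ‖w x y - w' x y‖ ≤ ε) :
    ‖∫ z, h z.1 * conj (h z.2) * w z.1 z.2 ∂μ.prod μ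
        - ∫ z, h z.1 * conj (h z.2) * w' z.1 z.2 ∂μ.prod μ‖
      ≤ ε * (∫ x, ‖h x‖ ∂μ) ^ 2 := by
  rw [← integral_sub hw hw']
  calc _ ≤ ∫ z, ε * (‖h z.1‖ * ‖h z.2‖) ∂μ.prod μ := by
        refine norm_integral_le_of_norm_le ((hh.norm.mul_prod hh.norm).const_mul ε)
          (ae_of_all _ fun z => ?_)
        rw [← mul_sub, norm_mul, norm_mul, RCLike.norm_conj, mul_comm]
        gcongr
        exact hε z.1 z.2
    _ = ε * (∫ x, ‖h x‖ ∂μ) ^ 2 := by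
        rw [integral_const_mul, integral_prod_mul (fun x => ‖h x‖) (fun y => ‖h y‖), sq]

theorem integral_prod_mul_conj_mul_nonneg {w : α → α → ℂ} {C : ℝ} (hh : Integrable h μ)
    (hw : AEStronglyMeasurable (fun z : α × α => w z.1 z.2) (μ.prod μ))
    (hC : ∀ x y, ‖w x y‖ ≤ C)
    (happrox : ∀ ε : ℝ, 0 < ε → ∃ (N : ℕ) (v : Fin N → α → ℂ),
      (∀ j, AEStronglyMeasurable (v j) μ ∧ ∃ C : ℝ, ∀ x, ‖v j x‖ ≤ C) ∧
      ∀ x y, ‖w x y - ∑ j, v j x * conj (v j y)‖ ≤ ε) :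
    0 ≤ ∫ z, h z.1 * conj (h z.2) * w z.1 z.2 ∂μ.prod μ := by
  set M := (∫ x, ‖h x‖ ∂μ) ^ 2 + 1
  have hM : 0 < M := by positivity
  refine (isClosed_Ici (a := (0 : ℂ))).closure_subset (Metric.mem_closure_iff.2 fun ε hε => ?_)
  obtain ⟨N, v, hv, hwv⟩ := happrox (ε / M) (div_pos hε hM)
  have hhv : ∀ j ∈ Finset.univ, Integrable (fun x => h x * v j x) μ := fun j _ =>
    hh.mul_bdd (hv j).1 (ae_of_all _ (hv j).2.choose_spec)
  have hwN : Integrable (fun z : α × α =>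
      h z.1 * conj (h z.2) * ∑ j, v j z.1 * conj (v j z.2)) (μ.prod μ) := by
    simp_rw [mul_conj_mul_sum_mul_conj]
    exact integrable_finsetSum _ fun j hj => integrable_prod_mul_conj (hhv j hj)
  refine ⟨∫ z, h z.1 * conj (h z.2) * ∑ j, v j z.1 * conj (v j z.2) ∂μ.prod μ, ?_, ?_⟩
  · rw [Set.mem_Ici, integral_prod_mul_conj_mul_sum _ hhv, zero_le_real]
    positivity
  · rw [dist_eq_norm]
    refine (norm_integral_prod_mul_conj_mul_sub_le hh (integrable_prod_mul_conj_mul hh hw hC)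
      hwN hwv).trans_lt ?_
    rw [div_mul_eq_mul_div, div_lt_iff₀ hM]
    gcongr
    linarith

end HermitianForm

section Fourier

variable {V : Type*} [NormedAddCommGroup V] [InnerProductSpace ℝ V]

theorem fourierChar_inner_add_mul_conj (x y ξ : V) :
    (𝐞 ⟪x + y, ξ⟫ : ℂ) * conj (𝐞 ⟪y, ξ⟫ : ℂ) = 𝐞 ⟪x, ξ⟫ := by
  rw [← Circle.coe_inv_eq_conj, ← Circle.coe_mul, inner_add_left, AddChar.map_add_eq_mul,
    mul_inv_cancel_right]

variable [FiniteDimensional ℝ V] [MeasurableSpace V] [BorelSpace V]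

theorem MeasureTheory.Integrable.fourierChar_inner_mul {f : V → ℂ} (hf : Integrable f) (ξ : V) :
    Integrable (fun u => (𝐞 ⟪u, ξ⟫ : ℂ) * f u) :=
  hf.bdd_mul (c := 1) (by fun_prop) (ae_of_all _ fun _ => (Circle.norm_coe _).le)

theorem fourierInv_weightedCorrelation {f : V → ℂ} {w : V → V → ℂ} {C : ℝ} (hf : Integrable f)
    (hw : AEStronglyMeasurable (fun z : V × V => w z.1 z.2) (volume.prod volume))
    (hC : ∀ x y, ‖w x y‖ ≤ C) (ξ : V) :
    𝓕⁻ (fun x => ∫ y, conj (f y) * f (x + y) * w (x + y) y) ξ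
      = ∫ z, 𝐞 ⟪z.1, ξ⟫ * f z.1 * conj (𝐞 ⟪z.2, ξ⟫ * f z.2) * w z.1 z.2
          ∂(volume.prod volume) := by
  have hHint := integrable_prod_mul_conj_mul (hf.fourierChar_inner_mul ξ) hw hC
  set H : V × V → ℂ := fun z => 𝐞 ⟪z.1, ξ⟫ * f z.1 * conj (𝐞 ⟪z.2, ξ⟫ * f z.2) * w z.1 z.2
  have hshear : ∀ x y, (𝐞 ⟪x, ξ⟫ : ℂ) * (conj (f y) * f (x + y) * w (x + y) y) = H (x + y, y) := by
    intro x y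
    show _ = (𝐞 ⟪x + y, ξ⟫ : ℂ) * f (x + y) * conj (𝐞 ⟪y, ξ⟫ * f y) * w (x + y) y
    rw [← fourierChar_inner_add_mul_conj x y ξ, map_mul]
    generalize (𝐞 ⟪x + y, ξ⟫ : ℂ) = a
    generalize (𝐞 ⟪y, ξ⟫ : ℂ) = b
    ring
  have hGint : Integrable (Function.uncurry fun x y =>
      (𝐞 ⟪x, ξ⟫ : ℂ) * (conj (f y) * f (x + y) * w (x + y) y)) (volume.prod volume) := by
    simpa only [Function.uncurry_def, Function.comp_def, hshear] using
      (measurePreserving_add_prod volume volume).integrable_comp_of_integrable hHint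
  calc 𝓕⁻ (fun x => ∫ y, conj (f y) * f (x + y) * w (x + y) y) ξ
      = ∫ x, ∫ y, (𝐞 ⟪x, ξ⟫ : ℂ) * (conj (f y) * f (x + y) * w (x + y) y) := by
        simp_rw [Real.fourierInv_eq, Circle.smul_def, smul_eq_mul, ← integral_const_mul]
    _ = ∫ y, ∫ x, H (x + y, y) := by
        simp_rw [integral_integral_swap hGint, hshear]
    _ = ∫ y, ∫ x, H (x, y) := by
        congr 1 with y
        exact integral_add_right_eq_self (fun x => H (x, y)) y
    _ = ∫ z, H z ∂(volume.prod volume) := (integral_prod_symm H hHint).symm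

end Fourier

theorem stmt7_general {d : ℕ} (U : Set (EuclideanSpace ℝ (Fin d))) (hUb : Bornology.IsBounded U)
    (f : EuclideanSpace ℝ (Fin d) → ℂ)
    (hf : MemLp f 2 (volume : Measure (EuclideanSpace ℝ (Fin d))))
    (hfU : ∀ x, x ∉ U → f x = 0)
    (w : EuclideanSpace ℝ (Fin d) → EuclideanSpace ℝ (Fin d) → ℂ)
    (hw : IsWPlus U w) :
    ∀ᵐ x ∂(volume : Measure (EuclideanSpace ℝ (Fin d))),
      (𝓕⁻ (wcc f f w) x).im = 0 ∧ 0 ≤ (𝓕⁻ (wcc f f w) x).re := by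
  obtain ⟨hwm, ⟨C, hC⟩, -, happrox⟩ := hw
  have hf1 : Integrable f :=
    hf.integrable_of_support_subset_isBounded one_le_two hUb (Function.support_subset_iff'.2 hfU)
  refine ae_of_all _ fun ξ => ?_
  have hpos := integral_prod_mul_conj_mul_nonneg (hf1.fourierChar_inner_mul ξ)
    hwm.aestronglyMeasurable hC fun ε hε => by
      obtain ⟨N, v, hv, hwv⟩ := happrox ε hε
      exact ⟨N, v, fun j => ⟨(hv j).1.aestronglyMeasurable, (hv j).2.1⟩, hwv⟩
  rw [← fourierInv_weightedCorrelation hf1 hwm.aestronglyMeasurable hC ξ] at hpos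
  exact ⟨(nonneg_iff.1 hpos).2.symm, (nonneg_iff.1 hpos).1⟩

theorem stmt7 {d : ℕ} (U : Set (EuclideanSpace ℝ (Fin d))) (hUb : Bornology.IsBounded U)
    (f : EuclideanSpace ℝ (Fin d) → ℂ)
    (hf : MemLp f 2 (volume : Measure (EuclideanSpace ℝ (Fin d))))
    (hfU : ∀ x, x ∉ U → f x = 0)
    (w : EuclideanSpace ℝ (Fin d) → EuclideanSpace ℝ (Fin d) → ℂ)
    (hw : IsWPlus U w)
    (hsym : ∀ x y, (starRingEnd ℂ) (w x y) = w y x) :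
    ∀ᵐ x ∂(volume : Measure (EuclideanSpace ℝ (Fin d))),
      (𝓕⁻ (wcc f f w) x).im = 0 ∧ 0 ≤ (𝓕⁻ (wcc f f w) x).re :=
  stmt7_general U hUb f hf hfU w hw
end

section
/- Let U ⊆ R^d be bounded and w ∈ W^+(U) with w*(x,y) = w(y,x). Then the functional F: L^2(R^d, C) → R, f ↦ ‖f ⋆_w f‖²_{L^2}, is Fréchet differentiable, with derivative F'[f](g) = 2 Re⟨f ⋆_w f, f ⋆_w g + g ⋆_w f⟩_{L^2}; in particular F is continuous. -/
open MeasureTheory Complex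

/-!
A weight in `W⁺(U)` with `U` bounded is bounded by some `C` and vanishes unless both arguments lie
in a ball of radius `R`. By Cauchy–Schwarz and translation invariance of Lebesgue measure,
`|(f ⋆_w g)(x)| ≤ C ‖f‖₂ ‖g‖₂` for every `x`, and `f ⋆_w g` vanishes outside the ball of radius
`2R`; so `(f, g) ↦ f ⋆_w g` is a bounded `ℝ`-bilinear (conjugate-linear in `f`) map `B` on
`L²`. The functional is `f ↦ ‖B f f‖²`, the composition of a bounded quadratic map with the
squared norm, and its derivative at `f` is `g ↦ 2 Re ⟪B f f, B f g + B g f⟫`.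
-/

open Metric

namespace MeasureTheory

variable {α E F : Type*} [MeasurableSpace α] {μ : Measure α}
  [NormedAddCommGroup E] [NormedAddCommGroup F] {f : α → E} {g : α → F}

lemma MemLp.integrable_norm_mul_norm (hf : MemLp f 2 μ) (hg : MemLp g 2 μ) :
    Integrable (fun a => ‖f a‖ * ‖g a‖) μ :=
  hf.norm.integrable_mul hg.norm

lemma integral_norm_mul_norm_le (hf : MemLp f 2 μ) (hg : MemLp g 2 μ) :
    ∫ a, ‖f a‖ * ‖g a‖ ∂μ ≤ (eLpNorm f 2 μ).toReal * (eLpNorm g 2 μ).toReal := by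
  have hinner : ∫ a, ‖f a‖ * ‖g a‖ ∂μ = inner ℝ (hf.norm.toLp _) (hg.norm.toLp _) := by
    rw [L2.inner_def]
    refine integral_congr_ae ?_
    filter_upwards [hf.norm.coeFn_toLp, hg.norm.coeFn_toLp] with a hfa hga
    simp [hfa, hga, mul_comm]
  rw [hinner, ← eLpNorm_norm f, ← eLpNorm_norm g, ← Lp.norm_toLp _ hf.norm,
    ← Lp.norm_toLp _ hg.norm]
  exact real_inner_le_norm _ _

end MeasureTheory

section QuadraticDerivative

variable {𝕜 E F : Type*} [RCLike 𝕜] [NormedAddCommGroup E] [NormedSpace ℝ E]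
  [NormedAddCommGroup F] [InnerProductSpace 𝕜 F] [NormedSpace ℝ F]

theorem ContinuousLinearMap.hasFDerivAt_norm_sq_apply_self (B : E →L[ℝ] E →L[ℝ] F) (x : E) :
    ∃ D : E →L[ℝ] ℝ, HasFDerivAt (fun y => ‖B y y‖ ^ 2) D x ∧
      ∀ h, D h = 2 * RCLike.re (inner 𝕜 (B x x) (B x h + B h x)) := by
  set B' := B.precompR E x (.id ℝ E) + B.precompL E (.id ℝ E) x
  have hB' : ∀ h, B' h = B x h + B h x := fun h => rfl
  have hB : HasFDerivAt (fun y => B y y) B' x :=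
    B.hasFDerivAt_of_bilinear (hasFDerivAt_id x) (hasFDerivAt_id x)
  have hnorm : (fun y => ‖B y y‖ ^ 2) = fun y => RCLike.re (inner 𝕜 (B y y) (B y y)) := by
    simp only [inner_self_eq_norm_sq]
  rw [hnorm]
  refine ⟨_, (RCLike.reCLM (K := 𝕜)).hasFDerivAt.comp x (hB.inner 𝕜 hB), fun h => ?_⟩
  simp only [ContinuousLinearMap.comp_apply, fderivInnerCLM_apply, ContinuousLinearMap.prod_apply,
    hB', RCLike.reCLM_apply]
  rw [← inner_conj_symm (B x h + B h x), map_add, RCLike.conj_re]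
  ring

end QuadraticDerivative

section

variable {d : ℕ} {w : EuclideanSpace ℝ (Fin d) → EuclideanSpace ℝ (Fin d) → ℂ}
  {f g : EuclideanSpace ℝ (Fin d) → ℂ}

lemma wcc_congr_ae_left {f' : EuclideanSpace ℝ (Fin d) → ℂ} (h : f =ᵐ[volume] f') :
    wcc f g w = wcc f' g w := by
  ext x
  refine integral_congr_ae ?_
  filter_upwards [h] with y hy
  rw [hy]

lemma wcc_congr_ae_right {g' : EuclideanSpace ℝ (Fin d) → ℂ} (h : g =ᵐ[volume] g') :
    wcc f g w = wcc f g' w := by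
  ext x
  refine integral_congr_ae ?_
  filter_upwards [(measurePreserving_add_left volume x).quasiMeasurePreserving.ae_eq h] with y hy
  simp only [Function.comp_apply] at hy
  rw [hy]

lemma wcc_smul_left (c : ℝ) : wcc (c • f) g w = c • wcc f g w := by
  ext x
  rw [Pi.smul_apply, wcc, wcc, ← integral_smul]
  congr 1 with y
  simp only [Pi.smul_apply, Complex.real_smul, map_mul, Complex.conj_ofReal]
  ring

lemma wcc_smul_right (c : ℝ) : wcc f (c • g) w = c • wcc f g w := by
  ext x
  rw [Pi.smul_apply, wcc, wcc, ← integral_smul]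
  congr 1 with y
  simp only [Pi.smul_apply, Complex.real_smul]
  ring

end

structure IsBoundedWeight {d : ℕ} (w : EuclideanSpace ℝ (Fin d) → EuclideanSpace ℝ (Fin d) → ℂ)
    (C R : ℝ) : Prop where
  measurable : Measurable (Function.uncurry w)
  norm_le : ∀ x y, ‖w x y‖ ≤ C
  eq_zero_of_lt_norm : ∀ x y, R < ‖x‖ ∨ R < ‖y‖ → w x y = 0

lemma IsWPlus.exists_isBoundedWeight {d : ℕ} {U : Set (EuclideanSpace ℝ (Fin d))}
    {w : EuclideanSpace ℝ (Fin d) → EuclideanSpace ℝ (Fin d) → ℂ} (hw : IsWPlus U w)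
    (hU : Bornology.IsBounded U) : ∃ C R, IsBoundedWeight w C R := by
  obtain ⟨hmeas, ⟨C, hC⟩, hsupp, -⟩ := hw
  obtain ⟨R, hR⟩ := hU.subset_closedBall 0
  have hout : ∀ x, R < ‖x‖ → x ∉ U := fun x hx hxU => by
    simpa [not_le.2 hx] using hR hxU
  exact ⟨C, R, hmeas, hC, fun x y h => hsupp x y (h.imp (hout x) (hout y))⟩

namespace IsBoundedWeight

variable {d : ℕ} {w : EuclideanSpace ℝ (Fin d) → EuclideanSpace ℝ (Fin d) → ℂ} {C R : ℝ}
  {f g : EuclideanSpace ℝ (Fin d) → ℂ}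

lemma nonneg (hw : IsBoundedWeight w C R) : 0 ≤ C := (norm_nonneg _).trans (hw.norm_le 0 0)

lemma aestronglyMeasurable_wcc_integrand (hw : IsBoundedWeight w C R)
    (hf : AEStronglyMeasurable f volume) (hg : AEStronglyMeasurable g volume) :
    AEStronglyMeasurable (fun p : EuclideanSpace ℝ (Fin d) × EuclideanSpace ℝ (Fin d) =>
      starRingEnd ℂ (f p.2) * g (p.1 + p.2) * w (p.1 + p.2) p.2) (volume.prod volume) := by
  have hadd : Measure.QuasiMeasurePreserving
      (fun p : EuclideanSpace ℝ (Fin d) × EuclideanSpace ℝ (Fin d) => p.1 + p.2)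
      (volume.prod volume) volume :=
    Measure.quasiMeasurePreserving_snd.comp
      (measurePreserving_prod_add volume volume).quasiMeasurePreserving
  refine ((continuous_conj.comp_aestronglyMeasurable
    (hf.comp_quasiMeasurePreserving Measure.quasiMeasurePreserving_snd)).mul
    (hg.comp_quasiMeasurePreserving hadd)).mul ?_
  exact (hw.measurable.comp
    ((measurable_fst.add measurable_snd).prodMk measurable_snd)).aestronglyMeasurable

lemma norm_wcc_integrand_le (hw : IsBoundedWeight w C R) (x y : EuclideanSpace ℝ (Fin d)) :
    ‖starRingEnd ℂ (f y) * g (x + y) * w (x + y) y‖ ≤ C * (‖f y‖ * ‖g (x + y)‖) := by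
  rw [norm_mul, norm_mul, RCLike.norm_conj, mul_comm C]
  exact mul_le_mul_of_nonneg_left (hw.norm_le _ _) (by positivity)

lemma integrable_wcc_integrand (hw : IsBoundedWeight w C R) (hf : MemLp f 2 volume)
    (hg : MemLp g 2 volume) (x : EuclideanSpace ℝ (Fin d)) :
    Integrable (fun y => starRingEnd ℂ (f y) * g (x + y) * w (x + y) y) volume := by
  have hgx := hg.comp_measurePreserving (measurePreserving_add_left volume x)
  refine ((hf.integrable_norm_mul_norm hgx).const_mul C).mono' ?_
    (.of_forall (hw.norm_wcc_integrand_le x))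
  exact ((continuous_conj.comp_aestronglyMeasurable hf.1).mul hgx.1).mul
    (hw.measurable.comp (measurable_const_add x |>.prodMk measurable_id)).aestronglyMeasurable

lemma norm_wcc_le (hw : IsBoundedWeight w C R) (hf : MemLp f 2 volume) (hg : MemLp g 2 volume)
    (x : EuclideanSpace ℝ (Fin d)) :
    ‖wcc f g w x‖ ≤ C * ((eLpNorm f 2 volume).toReal * (eLpNorm g 2 volume).toReal) := by
  have hgx := hg.comp_measurePreserving (measurePreserving_add_left volume x)
  calc ‖wcc f g w x‖ ≤ ∫ y, C * (‖f y‖ * ‖g (x + y)‖) :=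
        norm_integral_le_of_norm_le ((hf.integrable_norm_mul_norm hgx).const_mul C)
          (.of_forall (hw.norm_wcc_integrand_le x))
    _ = C * ∫ y, ‖f y‖ * ‖g (x + y)‖ := integral_const_mul C _
    _ ≤ C * ((eLpNorm f 2 volume).toReal * (eLpNorm g 2 volume).toReal) := by
        refine mul_le_mul_of_nonneg_left ?_ hw.nonneg
        rw [← eLpNorm_comp_measurePreserving hg.1 (measurePreserving_add_left volume x)]
        exact integral_norm_mul_norm_le hf hgx

lemma wcc_eq_zero_of_two_mul_lt_norm (hw : IsBoundedWeight w C R) {x : EuclideanSpace ℝ (Fin d)}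
    (hx : 2 * R < ‖x‖) : wcc f g w x = 0 := by
  have hzero : ∀ y, w (x + y) y = 0 := fun y => hw.eq_zero_of_lt_norm _ _ <| by
    by_contra! h
    have : ‖x‖ ≤ ‖x + y‖ + ‖y‖ := by simpa using norm_sub_le (x + y) y
    linarith [h.1, h.2]
  simp [wcc, hzero]

lemma aestronglyMeasurable_wcc (hw : IsBoundedWeight w C R) (hf : AEStronglyMeasurable f volume)
    (hg : AEStronglyMeasurable g volume) : AEStronglyMeasurable (wcc f g w) volume :=
  (hw.aestronglyMeasurable_wcc_integrand hf hg).integral_prod_right'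

lemma eLpNorm_wcc_le (hw : IsBoundedWeight w C R) (hf : MemLp f 2 volume)
    (hg : MemLp g 2 volume) :
    eLpNorm (wcc f g w) 2 volume ≤
      volume (closedBall (0 : EuclideanSpace ℝ (Fin d)) (2 * R)) ^ (2⁻¹ : ℝ) *
      ENNReal.ofReal (C * ((eLpNorm f 2 volume).toReal * (eLpNorm g 2 volume).toReal)) := by
  have hsupp : Function.support (wcc f g w) ⊆ closedBall 0 (2 * R) := fun x hx => by
    by_contra h
    exact hx (hw.wcc_eq_zero_of_two_mul_lt_norm (by simpa using h))
  rw [← eLpNorm_restrict_eq_of_support_subset hsupp]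
  simpa using eLpNorm_le_of_ae_bound (p := 2) (μ := volume.restrict (closedBall 0 (2 * R)))
    (.of_forall (hw.norm_wcc_le hf hg))

lemma memLp_wcc (hw : IsBoundedWeight w C R) (hf : MemLp f 2 volume) (hg : MemLp g 2 volume) :
    MemLp (wcc f g w) 2 volume :=
  ⟨hw.aestronglyMeasurable_wcc hf.1 hg.1, (hw.eLpNorm_wcc_le hf hg).trans_lt <|
    ENNReal.mul_lt_top (ENNReal.rpow_lt_top_of_nonneg (by norm_num) measure_closedBall_lt_top.ne)
      ENNReal.ofReal_lt_top⟩

lemma wcc_add_left (hw : IsBoundedWeight w C R) {f₁ f₂ : EuclideanSpace ℝ (Fin d) → ℂ}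
    (hf₁ : MemLp f₁ 2 volume) (hf₂ : MemLp f₂ 2 volume) (hg : MemLp g 2 volume) :
    wcc (f₁ + f₂) g w = wcc f₁ g w + wcc f₂ g w := by
  ext x
  rw [Pi.add_apply, wcc, wcc, wcc, ← integral_add (hw.integrable_wcc_integrand hf₁ hg x)
    (hw.integrable_wcc_integrand hf₂ hg x)]
  simp only [Pi.add_apply, map_add, add_mul]

lemma wcc_add_right (hw : IsBoundedWeight w C R) {g₁ g₂ : EuclideanSpace ℝ (Fin d) → ℂ}
    (hf : MemLp f 2 volume) (hg₁ : MemLp g₁ 2 volume) (hg₂ : MemLp g₂ 2 volume) :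
    wcc f (g₁ + g₂) w = wcc f g₁ w + wcc f g₂ w := by
  ext x
  rw [Pi.add_apply, wcc, wcc, wcc, ← integral_add (hw.integrable_wcc_integrand hf hg₁ x)
    (hw.integrable_wcc_integrand hf hg₂ x)]
  simp only [Pi.add_apply, mul_add, add_mul]

end IsBoundedWeight

local notation "L²[" d "]" => Lp ℂ 2 (volume : Measure (EuclideanSpace ℝ (Fin d)))

namespace IsBoundedWeight

variable {d : ℕ} {w : EuclideanSpace ℝ (Fin d) → EuclideanSpace ℝ (Fin d) → ℂ} {C R : ℝ}

noncomputable def wccL2 (hw : IsBoundedWeight w C R) (f g : L²[d]) : L²[d] :=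
  (hw.memLp_wcc (Lp.memLp f) (Lp.memLp g)).toLp _

variable (hw : IsBoundedWeight w C R)

lemma coeFn_wccL2 (f g : L²[d]) : hw.wccL2 f g =ᵐ[volume] wcc f g w :=
  MemLp.coeFn_toLp _

lemma norm_wccL2 (f g : L²[d]) : ‖hw.wccL2 f g‖ = (eLpNorm (wcc f g w) 2 volume).toReal :=
  Lp.norm_toLp _ _

lemma norm_wccL2_le (f g : L²[d]) :
    ‖hw.wccL2 f g‖ ≤
      C * (volume (closedBall (0 : EuclideanSpace ℝ (Fin d)) (2 * R)) ^ (2⁻¹ : ℝ)).toReal *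
        ‖f‖ * ‖g‖ := by
  rw [norm_wccL2, Lp.norm_def, Lp.norm_def]
  refine ENNReal.toReal_le_of_le_ofReal (by have := hw.nonneg; positivity) ?_
  refine (hw.eLpNorm_wcc_le (Lp.memLp f) (Lp.memLp g)).trans_eq ?_
  have hV : volume (closedBall (0 : EuclideanSpace ℝ (Fin d)) (2 * R)) ^ (2⁻¹ : ℝ) ≠ ⊤ :=
    ENNReal.rpow_ne_top_of_nonneg (by norm_num) measure_closedBall_lt_top.ne
  conv_lhs => rw [← ENNReal.ofReal_toReal hV, ← ENNReal.ofReal_mul ENNReal.toReal_nonneg]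
  congr 1
  ring

lemma wccL2_add_left (f₁ f₂ g : L²[d]) :
    hw.wccL2 (f₁ + f₂) g = hw.wccL2 f₁ g + hw.wccL2 f₂ g := by
  refine Lp.ext ((hw.coeFn_wccL2 _ _).trans ?_)
  rw [wcc_congr_ae_left (Lp.coeFn_add f₁ f₂),
    hw.wcc_add_left (Lp.memLp f₁) (Lp.memLp f₂) (Lp.memLp g)]
  exact ((hw.coeFn_wccL2 _ _).add (hw.coeFn_wccL2 _ _)).symm.trans (Lp.coeFn_add _ _).symm

lemma wccL2_add_right (f g₁ g₂ : L²[d]) :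
    hw.wccL2 f (g₁ + g₂) = hw.wccL2 f g₁ + hw.wccL2 f g₂ := by
  refine Lp.ext ((hw.coeFn_wccL2 _ _).trans ?_)
  rw [wcc_congr_ae_right (Lp.coeFn_add g₁ g₂),
    hw.wcc_add_right (Lp.memLp f) (Lp.memLp g₁) (Lp.memLp g₂)]
  exact ((hw.coeFn_wccL2 _ _).add (hw.coeFn_wccL2 _ _)).symm.trans (Lp.coeFn_add _ _).symm

lemma wccL2_smul_left (c : ℝ) (f g : L²[d]) : hw.wccL2 (c • f) g = c • hw.wccL2 f g := by
  refine Lp.ext ((hw.coeFn_wccL2 _ _).trans ?_)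
  rw [wcc_congr_ae_left (Lp.coeFn_smul c f), wcc_smul_left]
  exact ((hw.coeFn_wccL2 _ _).const_smul c).symm.trans (Lp.coeFn_smul _ _).symm

lemma wccL2_smul_right (c : ℝ) (f g : L²[d]) : hw.wccL2 f (c • g) = c • hw.wccL2 f g := by
  refine Lp.ext ((hw.coeFn_wccL2 _ _).trans ?_)
  rw [wcc_congr_ae_right (Lp.coeFn_smul c g), wcc_smul_right]
  exact ((hw.coeFn_wccL2 _ _).const_smul c).symm.trans (Lp.coeFn_smul _ _).symm

noncomputable def wccCLM : L²[d] →L[ℝ] L²[d] →L[ℝ] L²[d] :=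
  LinearMap.mkContinuous₂
    (LinearMap.mk₂ ℝ hw.wccL2 hw.wccL2_add_left hw.wccL2_smul_left hw.wccL2_add_right
      hw.wccL2_smul_right)
    _ hw.norm_wccL2_le

lemma wccCLM_apply (f g : L²[d]) : hw.wccCLM f g = hw.wccL2 f g := rfl

lemma re_inner_wccCLM (f g : L²[d]) :
    (inner ℂ (hw.wccCLM f f) (hw.wccCLM f g + hw.wccCLM g f)).re =
      (∫ x, wcc f f w x * starRingEnd ℂ (wcc f g w x + wcc g f w x)).re := by
  rw [L2.inner_def, ← Complex.conj_re, ← integral_conj]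
  congr 1
  refine integral_congr_ae ?_
  filter_upwards [hw.coeFn_wccL2 f f, hw.coeFn_wccL2 f g, hw.coeFn_wccL2 g f,
    Lp.coeFn_add (hw.wccL2 f g) (hw.wccL2 g f)] with x hff hfg hgf hadd
  rw [wccCLM_apply, wccCLM_apply, wccCLM_apply, hadd, Pi.add_apply, hff, hfg, hgf,
    RCLike.inner_apply, map_mul, Complex.conj_conj, mul_comm]

end IsBoundedWeight

theorem stmt9_general {d : ℕ} (U : Set (EuclideanSpace ℝ (Fin d))) (hUb : Bornology.IsBounded U)
    (w : EuclideanSpace ℝ (Fin d) → EuclideanSpace ℝ (Fin d) → ℂ)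
    (hw : IsWPlus U w) :
    (∀ f : Lp ℂ 2 (volume : Measure (EuclideanSpace ℝ (Fin d))),
      ∃ D : Lp ℂ 2 (volume : Measure (EuclideanSpace ℝ (Fin d))) →L[ℝ] ℝ,
        HasFDerivAt
          (fun f : Lp ℂ 2 (volume : Measure (EuclideanSpace ℝ (Fin d))) =>
            ((eLpNorm (wcc (⇑f) (⇑f) w) 2 volume).toReal) ^ 2) D f ∧
        ∀ g : Lp ℂ 2 (volume : Measure (EuclideanSpace ℝ (Fin d))),
          D g = 2 * (∫ x, wcc (⇑f) (⇑f) w x *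
            (starRingEnd ℂ) (wcc (⇑f) (⇑g) w x + wcc (⇑g) (⇑f) w x)).re) ∧
    Continuous
      (fun f : Lp ℂ 2 (volume : Measure (EuclideanSpace ℝ (Fin d))) =>
        ((eLpNorm (wcc (⇑f) (⇑f) w) 2 volume).toReal) ^ 2) := by
  obtain ⟨C, R, hwR⟩ := hw.exists_isBoundedWeight hUb
  have hF : (fun f : L²[d] => (eLpNorm (wcc f f w) 2 volume).toReal ^ 2) =
      fun f => ‖hwR.wccCLM f f‖ ^ 2 := by
    simp only [IsBoundedWeight.wccCLM_apply, IsBoundedWeight.norm_wccL2]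
  rw [hF]
  refine ⟨fun f => ?_, continuous_iff_continuousAt.2 fun f => ?_⟩ <;>
    obtain ⟨D, hD, hDg⟩ := hwR.wccCLM.hasFDerivAt_norm_sq_apply_self (𝕜 := ℂ) f
  · exact ⟨D, hD, fun g => by rw [hDg, RCLike.re_to_complex, hwR.re_inner_wccCLM]⟩
  · exact hD.continuousAt

theorem stmt9 {d : ℕ} (U : Set (EuclideanSpace ℝ (Fin d))) (hUb : Bornology.IsBounded U)
    (w : EuclideanSpace ℝ (Fin d) → EuclideanSpace ℝ (Fin d) → ℂ)
    (hw : IsWPlus U w)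
    (hsym : ∀ x y, (starRingEnd ℂ) (w x y) = w y x) :
    (∀ f : Lp ℂ 2 (volume : Measure (EuclideanSpace ℝ (Fin d))),
      ∃ D : Lp ℂ 2 (volume : Measure (EuclideanSpace ℝ (Fin d))) →L[ℝ] ℝ,
        HasFDerivAt
          (fun f : Lp ℂ 2 (volume : Measure (EuclideanSpace ℝ (Fin d))) =>
            ((eLpNorm (wcc (⇑f) (⇑f) w) 2 volume).toReal) ^ 2) D f ∧
        ∀ g : Lp ℂ 2 (volume : Measure (EuclideanSpace ℝ (Fin d))),
          D g = 2 * (∫ x, wcc (⇑f) (⇑f) w x *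
            (starRingEnd ℂ) (wcc (⇑f) (⇑g) w x + wcc (⇑g) (⇑f) w x)).re) ∧
    Continuous
      (fun f : Lp ℂ 2 (volume : Measure (EuclideanSpace ℝ (Fin d))) =>
        ((eLpNorm (wcc (⇑f) (⇑f) w) 2 volume).toReal) ^ 2) :=
  stmt9_general U hUb w hw
end

section
/- The map C: R → [−2, 2] given by the sine integral Si satisfies |Si(x)| ≤ Si(π) ≤ 2 for all x ∈ R, |Si(x) − π/2| ≤ 1/x for all x > 0, and |Si(x) + π/2| ≤ 1/(−x) for all x < 0. -/
open MeasureTheory Real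

/-- The sine integral `Si(x) = ∫_0^x sin(y)/y dy`. -/
noncomputable def Si (x : ℝ) : ℝ := ∫ y in (0 : ℝ)..x, Real.sin y / y

/-!
Writing `1 / t = ∫_0^∞ e^{-st} ds` and exchanging the order of integration gives, for
`x > 0`, `Si x = π / 2 + ∫_0^∞ F(s, x) ds`, where `F(s, ·) = -e^{-s·} (s sin + cos) / (1 + s²)`
(`dampedSinPrimitive`) is a primitive of `e^{-s·} sin`. Since `|F(s, x)| ≤ e^{-sx}`, this yields
`|Si x - π / 2| ≤ 1 / x`.

`Si` increases on `[0, π]` and decreases on `[π, 2π]`. On `[0, ∞)`, `sin` and `cos` minus their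
Taylor polynomials alternate in sign, since each is, up to sign, the integral of the other,
starting from `cos ≤ 1`. Integrating these bounds for `sin t / t` gives `1.82 < Si π < 1.96`,
so `Si π ≤ 2` and `Si π ≥ π / 2 + 1 / (2π)`, which by the tail bound dominates `Si` beyond
`2π`. Oddness of `Si` handles `x < 0`.
-/

open Finset Nat Set Filter

lemma le_of_hasDerivAt_nonneg {f f' : ℝ → ℝ} {a x : ℝ} (hf : ∀ t, HasDerivAt f (f' t) t)
    (hf' : ∀ t, a ≤ t → 0 ≤ f' t) (hax : a ≤ x) : f a ≤ f x :=
  monotoneOn_of_hasDerivWithinAt_nonneg (convex_Ici a)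
    (fun t _ => (hf t).continuousAt.continuousWithinAt) (fun t _ => (hf t).hasDerivWithinAt)
    (fun t ht => hf' t (interior_subset ht)) self_mem_Ici hax hax

lemma hasDerivAt_pow_succ_div_factorial (m : ℕ) (x : ℝ) :
    HasDerivAt (fun x : ℝ => x ^ (m + 1) / (m + 1)!) (x ^ m / m !) x :=
  ((hasDerivAt_pow (m + 1) x).div_const _).congr_deriv <| by
    rw [factorial_succ]
    push_cast
    field_simp

noncomputable def sinTaylor (n : ℕ) (x : ℝ) : ℝ :=
  ∑ k ∈ range n, (-1) ^ k * (x ^ (2 * k + 1) / (2 * k + 1)!)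

noncomputable def cosTaylor (n : ℕ) (x : ℝ) : ℝ :=
  ∑ k ∈ range n, (-1) ^ k * (x ^ (2 * k) / (2 * k)!)

noncomputable def sincTaylor (n : ℕ) (x : ℝ) : ℝ :=
  ∑ k ∈ range n, (-1) ^ k * (x ^ (2 * k) / (2 * k + 1)!)

lemma hasDerivAt_sinTaylor (n : ℕ) (x : ℝ) : HasDerivAt (sinTaylor n) (cosTaylor n x) x := by
  unfold sinTaylor cosTaylor
  exact HasDerivAt.fun_sum fun k _ => (hasDerivAt_pow_succ_div_factorial (2 * k) x).const_mul _

lemma hasDerivAt_cosTaylor_succ (n : ℕ) (x : ℝ) :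
    HasDerivAt (cosTaylor (n + 1)) (-sinTaylor n x) x := by
  unfold cosTaylor sinTaylor
  simp only [sum_range_succ', show ∀ k, 2 * (k + 1) = 2 * k + 1 + 1 from fun k => by ring,
    ← sum_neg_distrib, mul_zero, pow_zero, factorial_zero, cast_one, div_one, mul_one]
  apply HasDerivAt.add_const
  refine HasDerivAt.fun_sum fun k _ => ?_
  exact ((hasDerivAt_pow_succ_div_factorial (2 * k + 1) x).const_mul _).congr_deriv (by ring)

lemma sinTaylor_eq_mul_sincTaylor (n : ℕ) (x : ℝ) : sinTaylor n x = x * sincTaylor n x := by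
  simp only [sinTaylor, sincTaylor, mul_sum]
  exact sum_congr rfl fun k _ => by ring

lemma sinTaylor_zero (n : ℕ) : sinTaylor n 0 = 0 := by
  simp [sinTaylor]

lemma cosTaylor_succ_zero (n : ℕ) : cosTaylor (n + 1) 0 = 1 := by
  simp [cosTaylor, sum_range_succ']

lemma sin_sub_sinTaylor_sign_of_cos {n : ℕ}
    (hcos : ∀ t, 0 ≤ t → 0 ≤ (-1) ^ n * (cos t - cosTaylor n t)) {x : ℝ} (hx : 0 ≤ x) :
    0 ≤ (-1) ^ n * (sin x - sinTaylor n x) := by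
  simpa [sinTaylor_zero] using le_of_hasDerivAt_nonneg
    (fun t => (((hasDerivAt_sin t).sub (hasDerivAt_sinTaylor n t)).const_mul ((-1) ^ n))) hcos hx

lemma cos_sub_cosTaylor_sign_of_sin {n : ℕ}
    (hsin : ∀ t, 0 ≤ t → 0 ≤ (-1) ^ n * (sin t - sinTaylor n t)) {x : ℝ} (hx : 0 ≤ x) :
    0 ≤ (-1) ^ (n + 1) * (cos x - cosTaylor (n + 1) x) := by
  have hderiv (t : ℝ) : HasDerivAt (fun t => (-1) ^ (n + 1) * (cos t - cosTaylor (n + 1) t))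
      ((-1) ^ n * (sin t - sinTaylor n t)) t :=
    (((hasDerivAt_cos t).sub (hasDerivAt_cosTaylor_succ n t)).const_mul _).congr_deriv (by ring)
  simpa [cosTaylor_succ_zero] using le_of_hasDerivAt_nonneg hderiv hsin hx

lemma cos_sub_cosTaylor_sign (n : ℕ) {x : ℝ} (hx : 0 ≤ x) :
    0 ≤ (-1) ^ (n + 1) * (cos x - cosTaylor (n + 1) x) := by
  induction n generalizing x with
  | zero => simpa [cosTaylor] using cos_le_one x
  | succ n ih =>
    exact cos_sub_cosTaylor_sign_of_sin
      (fun _ ht => sin_sub_sinTaylor_sign_of_cos (fun _ => ih) ht) hx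

lemma sin_sub_sinTaylor_sign (n : ℕ) {x : ℝ} (hx : 0 ≤ x) :
    0 ≤ (-1) ^ (n + 1) * (sin x - sinTaylor (n + 1) x) :=
  sin_sub_sinTaylor_sign_of_cos (fun _ ht => cos_sub_cosTaylor_sign n ht) hx

lemma integral_sincTaylor (n : ℕ) (b : ℝ) :
    ∫ t in (0 : ℝ)..b, sincTaylor n t =
      ∑ k ∈ range n, (-1) ^ k * (b ^ (2 * k + 1) / ((2 * k + 1) * (2 * k + 1)!)) := by
  unfold sincTaylor
  rw [intervalIntegral.integral_finsetSum fun k _ =>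
    (by fun_prop : Continuous _).intervalIntegrable _ _]
  refine sum_congr rfl fun k _ => ?_
  rw [intervalIntegral.integral_const_mul, intervalIntegral.integral_div, integral_pow]
  push_cast
  field_simp
  ring

lemma sin_div_sub_sincTaylor_sign (n : ℕ) {x : ℝ} (hx : 0 < x) :
    0 ≤ (-1) ^ (n + 1) * (sin x / x - sincTaylor (n + 1) x) := by
  have h := sin_sub_sinTaylor_sign n hx.le
  rw [sinTaylor_eq_mul_sincTaylor] at h
  have : (-1) ^ (n + 1) * (sin x / x - sincTaylor (n + 1) x) =
      (-1) ^ (n + 1) * (sin x - x * sincTaylor (n + 1) x) / x := by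
    field_simp
  rw [this]
  exact div_nonneg h hx.le

lemma intervalIntegrable_sin_div (a b : ℝ) :
    IntervalIntegrable (fun y => sin y / y) volume a b := by
  refine (continuous_sinc.intervalIntegrable a b).congr_ae (ae_restrict_of_ae ?_)
  filter_upwards [compl_mem_ae_iff.2 (measure_singleton (0 : ℝ))] with y hy
  exact sinc_of_ne_zero hy

lemma Si_sub_Si (a b : ℝ) : Si b - Si a = ∫ y in a..b, sin y / y :=
  intervalIntegral.integral_interval_sub_left (intervalIntegrable_sin_div 0 b)
    (intervalIntegrable_sin_div 0 a)

lemma Si_neg (x : ℝ) : Si (-x) = -Si x := by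
  have := intervalIntegral.integral_comp_neg (a := 0) (b := x) (fun y => sin y / y)
  simp only [sin_neg, neg_div_neg_eq, neg_zero] at this
  rw [Si, Si, intervalIntegral.integral_symm, ← this]

lemma monotoneOn_Si : MonotoneOn Si (Icc 0 π) := fun a ha b hb hab => by
  rw [← sub_nonneg, Si_sub_Si]
  exact intervalIntegral.integral_nonneg hab fun y hy =>
    div_nonneg (sin_nonneg_of_nonneg_of_le_pi (ha.1.trans hy.1) (hy.2.trans hb.2))
      (ha.1.trans hy.1)

lemma antitoneOn_Si : AntitoneOn Si (Icc π (2 * π)) := fun a ha b hb hab => by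
  rw [← sub_nonneg, ← neg_sub, Si_sub_Si, ← intervalIntegral.integral_neg]
  refine intervalIntegral.integral_nonneg hab fun y hy => ?_
  have hy0 : 0 < y := pi_pos.trans_le (ha.1.trans hy.1)
  have : sin y ≤ 0 := by
    rw [← neg_nonneg, ← sin_sub_pi]
    exact sin_nonneg_of_nonneg_of_le_pi (by linarith [ha.1, hy.1]) (by linarith [hy.2, hb.2])
  rw [neg_nonneg]
  exact div_nonpos_of_nonpos_of_nonneg this hy0.le

lemma Si_sub_sum_sign (n : ℕ) {b : ℝ} (hb : 0 ≤ b) :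
    0 ≤ (-1) ^ (n + 1) * (Si b -
      ∑ k ∈ range (n + 1), (-1) ^ k * (b ^ (2 * k + 1) / ((2 * k + 1) * (2 * k + 1)!))) := by
  have hcont : Continuous (sincTaylor (n + 1)) := by unfold sincTaylor; fun_prop
  rw [← integral_sincTaylor, Si, ← intervalIntegral.integral_sub (intervalIntegrable_sin_div 0 b)
    (hcont.intervalIntegrable 0 b), ← intervalIntegral.integral_const_mul,
    intervalIntegral.integral_of_le hb]
  exact setIntegral_nonneg measurableSet_Ioc fun t ht => sin_div_sub_sincTaylor_sign n ht.1

lemma Si_pi_le_two : Si π ≤ 2 := by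
  have h := Si_sub_sum_sign 2 pi_pos.le
  norm_num [sum_range_succ, factorial] at h
  have h3 := pow_le_pow_left₀ (by norm_num) pi_gt_d2.le 3
  have h5 := pow_le_pow_left₀ pi_pos.le pi_lt_d2.le 5
  norm_num at h3 h5
  linarith [pi_lt_d2]

lemma pi_div_two_add_inv_two_pi_le_Si_pi : π / 2 + 1 / (2 * π) ≤ Si π := by
  have h := Si_sub_sum_sign 3 pi_pos.le
  norm_num [sum_range_succ, factorial] at h
  have h3 := pow_le_pow_left₀ pi_pos.le pi_lt_d2.le 3
  have h5 := pow_le_pow_left₀ (by norm_num) pi_gt_d2.le 5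
  have h7 := pow_le_pow_left₀ pi_pos.le pi_lt_d2.le 7
  have hinv : 1 / (2 * π) ≤ 1 / 6 :=
    one_div_le_one_div_of_le (by norm_num) (by linarith [pi_gt_three])
  norm_num at h3 h5 h7
  linarith [pi_gt_d2]

noncomputable def dampedSinPrimitive (s t : ℝ) : ℝ :=
  -(exp (-s * t) * (s * sin t + cos t)) / (1 + s ^ 2)

lemma hasDerivAt_dampedSinPrimitive (s t : ℝ) :
    HasDerivAt (dampedSinPrimitive s) (exp (-s * t) * sin t) t := by
  have hexp : HasDerivAt (fun t => exp (-s * t)) (exp (-s * t) * -s) t := by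
    simpa using ((hasDerivAt_id t).const_mul (-s)).exp
  have htrig : HasDerivAt (fun t => s * sin t + cos t) (s * cos t - sin t) t :=
    (((hasDerivAt_sin t).const_mul s).add (hasDerivAt_cos t)).congr_deriv (by ring)
  refine ((hexp.mul htrig).neg.div_const _).congr_deriv ?_
  field_simp
  ring

lemma integral_exp_mul_sin (s b : ℝ) :
    ∫ t in (0 : ℝ)..b, exp (-s * t) * sin t = dampedSinPrimitive s b + (1 + s ^ 2)⁻¹ := by
  have hcont : Continuous fun t => exp (-s * t) * sin t := by fun_prop
  rw [intervalIntegral.integral_eq_sub_of_hasDerivAt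
    (fun t _ => hasDerivAt_dampedSinPrimitive s t) (hcont.intervalIntegrable _ _)]
  simp [dampedSinPrimitive]
  ring

lemma norm_dampedSinPrimitive_le (s t : ℝ) : ‖dampedSinPrimitive s t‖ ≤ exp (-s * t) := by
  have hden : 0 < 1 + s ^ 2 := by positivity
  have hcs : |s * sin t + cos t| ≤ 1 + s ^ 2 := by
    rw [abs_le]
    constructor <;> nlinarith [sin_sq_add_cos_sq t, sq_nonneg (s * cos t - sin t),
      sq_nonneg (s * sin t + cos t - 1 - s ^ 2), sq_nonneg (s * sin t + cos t + 1 + s ^ 2)]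
  rw [norm_eq_abs, dampedSinPrimitive, abs_div, abs_neg, abs_mul, abs_of_pos (exp_pos _),
    abs_of_pos hden, div_le_iff₀ hden]
  exact mul_le_mul_of_nonneg_left hcs (exp_pos _).le

lemma integral_exp_neg_mul_Ioi {t : ℝ} (ht : 0 < t) : ∫ s in Ioi 0, exp (-s * t) = 1 / t := by
  simp_rw [neg_mul, ← mul_neg, mul_comm _ (-t)]
  rw [integral_exp_mul_Ioi (neg_neg_of_pos ht)]
  simp [neg_div]

lemma integrableOn_exp_neg_mul_Ioi {t : ℝ} (ht : 0 < t) :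
    IntegrableOn (fun s => exp (-s * t)) (Ioi 0) := by
  simpa [mul_comm] using exp_neg_integrableOn_Ioi 0 ht

lemma integrableOn_dampedSinPrimitive {t : ℝ} (ht : 0 < t) :
    IntegrableOn (fun s => dampedSinPrimitive s t) (Ioi 0) :=
  (integrableOn_exp_neg_mul_Ioi ht).mono'
    (Continuous.div (by fun_prop) (by fun_prop) fun s => by positivity).aestronglyMeasurable
    (Eventually.of_forall fun s => norm_dampedSinPrimitive_le s t)

lemma integral_exp_neg_mul_mul_Ioi {t : ℝ} (ht : 0 < t) (c : ℝ) :
    ∫ s in Ioi 0, exp (-s * t) * c = c / t := by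
  rw [integral_mul_const, integral_exp_neg_mul_Ioi ht]
  ring

lemma integrable_exp_mul_sin_prod (x : ℝ) :
    Integrable (fun p : ℝ × ℝ => exp (-p.2 * p.1) * sin p.1)
      ((volume.restrict (Ioc 0 x)).prod (volume.restrict (Ioi 0))) := by
  refine (integrable_prod_iff (by fun_prop)).2 ⟨?_, ?_⟩
  · filter_upwards [ae_restrict_mem measurableSet_Ioc] with t ht
    exact (integrableOn_exp_neg_mul_Ioi ht.1).mul_const _
  · refine (intervalIntegrable_sin_div 0 x).1.norm.congr ?_
    filter_upwards [ae_restrict_mem measurableSet_Ioc] with t ht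
    simp only [norm_mul, norm_eq_abs, abs_exp, abs_div, abs_of_pos ht.1]
    exact (integral_exp_neg_mul_mul_Ioi ht.1 _).symm

lemma Si_eq_pi_div_two_add {x : ℝ} (hx : 0 < x) :
    Si x = π / 2 + ∫ s in Ioi 0, dampedSinPrimitive s x := by
  have hsinc : ∀ t ∈ Ioc 0 x, sin t / t = ∫ s in Ioi 0, exp (-s * t) * sin t :=
    fun t ht => (integral_exp_neg_mul_mul_Ioi ht.1 _).symm
  calc Si x = ∫ t in Ioc 0 x, ∫ s in Ioi 0, exp (-s * t) * sin t := by
        rw [Si, intervalIntegral.integral_of_le hx.le]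
        exact setIntegral_congr_fun measurableSet_Ioc hsinc
    _ = ∫ s in Ioi 0, ∫ t in Ioc 0 x, exp (-s * t) * sin t :=
        integral_integral_swap (integrable_exp_mul_sin_prod x)
    _ = ∫ s in Ioi 0, (dampedSinPrimitive s x + (1 + s ^ 2)⁻¹) := by
        simp_rw [← intervalIntegral.integral_of_le hx.le, integral_exp_mul_sin]
    _ = π / 2 + ∫ s in Ioi 0, dampedSinPrimitive s x := by
        rw [integral_add (integrableOn_dampedSinPrimitive hx)
          integrable_inv_one_add_sq.integrableOn, integral_Ioi_inv_one_add_sq, arctan_zero,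
          sub_zero, add_comm]

lemma abs_Si_sub_pi_div_two_le {x : ℝ} (hx : 0 < x) : |Si x - π / 2| ≤ 1 / x := by
  rw [Si_eq_pi_div_two_add hx, add_sub_cancel_left, ← integral_exp_neg_mul_Ioi hx]
  exact norm_integral_le_of_norm_le (integrableOn_exp_neg_mul_Ioi hx)
    (Eventually.of_forall fun s => norm_dampedSinPrimitive_le s x)

lemma abs_Si_add_pi_div_two_le {x : ℝ} (hx : x < 0) : |Si x + π / 2| ≤ 1 / -x := by
  have h := abs_Si_sub_pi_div_two_le (neg_pos.2 hx)
  rwa [Si_neg, ← abs_neg, neg_sub, sub_neg_eq_add, add_comm] at h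

lemma abs_Si_le_Si_pi_of_nonneg {x : ℝ} (hx : 0 ≤ x) : |Si x| ≤ Si π := by
  have hSi0 : Si 0 = 0 := intervalIntegral.integral_same
  rcases le_total x π with hxπ | hπx
  · have h0 := monotoneOn_Si ⟨le_rfl, pi_pos.le⟩ ⟨hx, hxπ⟩ hx
    rw [abs_of_nonneg (hSi0 ▸ h0)]
    exact monotoneOn_Si ⟨hx, hxπ⟩ ⟨pi_pos.le, le_rfl⟩ hxπ
  have hx0 : 0 < x := pi_pos.trans_le hπx
  have htail := abs_le.1 (abs_Si_sub_pi_div_two_le hx0)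
  have hinv : 1 / x ≤ 1 / π := one_div_le_one_div_of_le pi_pos hπx
  have hinvπ : 1 / π < π / 2 := by
    rw [div_lt_div_iff₀ pi_pos two_pos]
    nlinarith [pi_gt_three]
  rw [abs_of_nonneg (by linarith)]
  rcases le_total x (2 * π) with hx2π | h2πx
  · exact antitoneOn_Si ⟨le_rfl, by linarith [pi_pos]⟩ ⟨hπx, hx2π⟩ hπx
  · have : 1 / x ≤ 1 / (2 * π) := one_div_le_one_div_of_le (by positivity) h2πx
    linarith [pi_div_two_add_inv_two_pi_le_Si_pi]

lemma abs_Si_le_Si_pi (x : ℝ) : |Si x| ≤ Si π := by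
  rcases le_total 0 x with hx | hx
  · exact abs_Si_le_Si_pi_of_nonneg hx
  · rw [← neg_neg x, Si_neg, abs_neg]
    exact abs_Si_le_Si_pi_of_nonneg (neg_nonneg.2 hx)

theorem stmt15 :
    (∀ x : ℝ, |Si x| ≤ Si Real.pi) ∧ Si Real.pi ≤ 2 ∧
    (∀ x : ℝ, 0 < x → |Si x - Real.pi / 2| ≤ 1 / x) ∧
    (∀ x : ℝ, x < 0 → |Si x + Real.pi / 2| ≤ 1 / (-x)) :=
  ⟨abs_Si_le_Si_pi, Si_pi_le_two, fun _ => abs_Si_sub_pi_div_two_le,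
    fun _ => abs_Si_add_pi_div_two_le⟩
end

section
/- Let g: R → R be monotonic, bounded, and positive, and k ∈ L^1_loc(R, R). Suppose there exist N > 0 and α_N, β_N > 0 such that |∫_I k| ≤ α_N for all intervals I ⊆ [−N, N], and |∫_I k| ≤ β_N for all bounded intervals I ⊆ R \ [−N, N]. Then for every x ∈ R, |(g*k)(x) − δ_N g(x−N)| ≤ |g(x+N) − g(x−N)| α_N + 4 ‖g‖_∞ β_N, where δ_N = ∫_{[−N,N]} k(y) dy. -/
open MeasureTheory intervalIntegral Set

/-!
Bonnet's second mean value theorem, in the form `|∫_a^b h k| ≤ h a * sup_{c ∈ [a, b]} |∫_a^c k|`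
for antitone `h` with `h b ≥ 0`: writing `h y` as the length of `(0, h y)`, Fubini turns
`∫_a^b h k` into an integral over `t ∈ (0, h a)` of integrals of `k` over the superlevel sets
`{t < h}`, which are intervals `(a, c]` up to a null set.

With `h = g (x - ·)`, applying this to `h - h N` on `[-N, N]` gives the `α_N` term; on a tail
interval the same estimate together with the endpoint term `h b * ∫_a^b k` gives `2 M β_N`, and
letting the interval grow bounds each of the two tails.
-/

section Bonnet

variable {h k : ℝ → ℝ} {a b C : ℝ}

theorem Antitone.exists_Ioc_inter_setOf_lt_ae_eq (hh : Antitone h) (hab : a ≤ b) (t : ℝ) :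
    ∃ c ∈ Icc a b, (Ioc a b ∩ {y | t < h y} : Set ℝ) =ᵐ[volume] Ioc a c := by
  set S := insert a ({y | t < h y} ∩ Iic b)
  have hSb : ∀ y ∈ S, y ≤ b := by rintro y (rfl | ⟨-, hy⟩); exacts [hab, hy]
  have haS : a ∈ S := mem_insert _ _
  have hS : BddAbove S := ⟨b, hSb⟩
  refine ⟨sSup S, ⟨le_csSup hS haS, csSup_le ⟨a, haS⟩ hSb⟩, ?_⟩
  have hsub : Ioc a b ∩ {y | t < h y} ⊆ Ioc a (sSup S) :=
    fun y hy => ⟨hy.1.1, le_csSup hS (Or.inr ⟨hy.2, hy.1.2⟩)⟩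
  have hsup : Ioo a (sSup S) ⊆ Ioc a b ∩ {y | t < h y} := by
    rintro y ⟨hay, hyc⟩
    obtain ⟨u, hu, hyu⟩ := exists_lt_of_lt_csSup ⟨a, haS⟩ hyc
    rcases hu with rfl | ⟨htu, hub⟩
    · exact absurd hyu hay.not_gt
    · exact ⟨⟨hay, hyu.le.trans hub⟩, lt_of_lt_of_le htu (hh hyu.le)⟩
  exact hsub.eventuallyLE.antisymm (Ioo_ae_eq_Ioc.symm.le.trans hsup.eventuallyLE)

theorem Antitone.abs_setIntegral_Ioc_inter_setOf_lt_le (hh : Antitone h) (hab : a ≤ b)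
    (hK : ∀ c ∈ Icc a b, |∫ y in a..c, k y| ≤ C) (t : ℝ) :
    |∫ y in Ioc a b ∩ {y | t < h y}, k y| ≤ C := by
  obtain ⟨c, hc, hae⟩ := hh.exists_Ioc_inter_setOf_lt_ae_eq hab t
  rw [setIntegral_congr_set hae, ← integral_of_le hc.1]
  exact hK c hc

theorem Antitone.abs_intervalIntegral_mul_le (hh : Antitone h) (hab : a ≤ b) (hb : 0 ≤ h b)
    (hk : IntervalIntegrable k volume a b) (hK : ∀ c ∈ Icc a b, |∫ y in a..c, k y| ≤ C) :
    |∫ y in a..b, h y * k y| ≤ h a * C := by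
  rw [integral_of_le hab]
  have hk' : IntegrableOn k (Ioc a b) := (intervalIntegrable_iff_integrableOn_Ioc_of_le hab).1 hk
  set F : ℝ → ℝ → ℝ := fun y t => if t < h y then k y else 0
  have hlayer : ∀ y ∈ Ioc a b, ∫ t in Ioo 0 (h a), F y t = h y * k y := by
    intro y hy
    have hy0 : 0 ≤ h y := hb.trans (hh hy.2)
    have hya : h y ≤ h a := hh hy.1.le
    rw [show F y = (Iio (h y)).indicator (fun _ => k y) by ext t; simp [F, indicator_apply],
      integral_indicator_const _ measurableSet_Iio, measureReal_restrict_apply measurableSet_Iio,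
      Iio_inter_Ioo, min_eq_left hya, Real.volume_real_Ioo_of_le hy0, sub_zero, smul_eq_mul]
  have hF : Integrable (Function.uncurry F)
      ((volume.restrict (Ioc a b)).prod (volume.restrict (Ioo 0 (h a)))) := by
    refine (hk'.abs.mul_prod (integrable_const (1 : ℝ))).mono' ?_ (ae_of_all _ fun p => ?_)
    · have : Function.uncurry F = {p : ℝ × ℝ | p.2 < h p.1}.indicator (fun p => k p.1) := by
        ext p; simp [F, Function.uncurry, indicator_apply]
      rw [this]
      exact hk'.aestronglyMeasurable.comp_fst.indicator
        (measurableSet_lt measurable_snd (hh.measurable.comp measurable_fst))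
    · simp only [Function.uncurry, F, mul_one, Real.norm_eq_abs]
      split_ifs <;> simp
  have hsection : ∀ t, ∫ y in Ioc a b, F y t = ∫ y in Ioc a b ∩ {y | t < h y}, k y := by
    intro t
    rw [← setIntegral_indicator (measurableSet_lt measurable_const hh.measurable)]
    rfl
  calc |∫ y in Ioc a b, h y * k y|
      = ‖∫ t in Ioo 0 (h a), ∫ y in Ioc a b, F y t‖ := by
        rw [← setIntegral_congr_fun measurableSet_Ioc hlayer, integral_integral_swap hF,
          Real.norm_eq_abs]
    _ ≤ C * volume.real (Ioo 0 (h a)) :=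
        norm_setIntegral_le_of_norm_le_const measure_Ioo_lt_top fun t _ => by
          rw [hsection, Real.norm_eq_abs]
          exact hh.abs_setIntegral_Ioc_inter_setOf_lt_le hab hK t
    _ = h a * C := by rw [Real.volume_real_Ioo_of_le (hb.trans (hh hab)), sub_zero, mul_comm]

theorem Antitone.intervalIntegrable_mul (hh : Antitone h) (hab : a ≤ b)
    (hk : IntervalIntegrable k volume a b) : IntervalIntegrable (fun y => h y * k y) volume a b := by
  rw [intervalIntegrable_iff_integrableOn_Ioc_of_le hab] at hk ⊢
  exact hk.bdd_mul hh.measurable.aestronglyMeasurable <| (ae_restrict_iff' measurableSet_Ioc).2 <|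
    ae_of_all _ fun y hy => abs_le_max_abs_abs (hh hy.2) (hh hy.1.le)

theorem Antitone.abs_intervalIntegral_mul_sub_le (hh : Antitone h) (hab : a ≤ b)
    (hk : IntervalIntegrable k volume a b) (hK : ∀ c ∈ Icc a b, |∫ y in a..c, k y| ≤ C) :
    |(∫ y in a..b, h y * k y) - h b * ∫ y in a..b, k y| ≤ (h a - h b) * C := by
  have hbonnet := Antitone.abs_intervalIntegral_mul_le (h := fun y => h y - h b)
    (fun _ _ huv => sub_le_sub_right (hh huv) _) hab (sub_self _).ge hk hK
  rw [← intervalIntegral.integral_const_mul,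
    ← integral_sub (hh.intervalIntegrable_mul hab hk) (hk.const_mul _)]
  simpa only [sub_mul] using hbonnet

theorem abs_intervalIntegral_mul_sub_le_of_monotone_or_antitone (hh : Monotone h ∨ Antitone h)
    (hab : a ≤ b) (hk : IntervalIntegrable k volume a b)
    (hK : ∀ c ∈ Icc a b, |∫ y in a..c, k y| ≤ C) :
    |(∫ y in a..b, h y * k y) - h b * ∫ y in a..b, k y| ≤ |h a - h b| * C := by
  rcases hh with hh | hh
  · have := hh.neg.abs_intervalIntegral_mul_sub_le hab hk hK
    have hneg : (∫ y in a..b, -h y * k y) - -h b * ∫ y in a..b, k y =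
        -((∫ y in a..b, h y * k y) - h b * ∫ y in a..b, k y) := by
      simp only [neg_mul, intervalIntegral.integral_neg]; ring
    rw [hneg, abs_neg] at this
    convert this using 2
    rw [abs_of_nonpos (sub_nonpos.2 (hh hab))]
    ring
  · rw [abs_of_nonneg (sub_nonneg.2 (hh hab))]
    exact hh.abs_intervalIntegral_mul_sub_le hab hk hK

theorem abs_intervalIntegral_mul_le_two_mul {M : ℝ} (hh : Monotone h ∨ Antitone h)
    (h0 : ∀ y, 0 ≤ h y) (hM : ∀ y, h y ≤ M) (hab : a ≤ b) (hk : IntervalIntegrable k volume a b)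
    (hK : ∀ c ∈ Icc a b, |∫ y in a..c, k y| ≤ C) :
    |∫ y in a..b, h y * k y| ≤ 2 * M * C := by
  have hC : 0 ≤ C := by simpa using hK a ⟨le_rfl, hab⟩
  have hosc : |h a - h b| ≤ M :=
    abs_sub_le_iff.2 ⟨by linarith [h0 b, hM a], by linarith [h0 a, hM b]⟩
  have hend : |h b * ∫ y in a..b, k y| ≤ M * C := by
    rw [abs_mul, abs_of_nonneg (h0 b)]
    exact mul_le_mul (hM b) (hK b ⟨hab, le_rfl⟩) (abs_nonneg _) ((h0 b).trans (hM b))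
  have hsub := abs_intervalIntegral_mul_sub_le_of_monotone_or_antitone hh hab hk hK
  calc |∫ y in a..b, h y * k y|
      ≤ |(∫ y in a..b, h y * k y) - h b * ∫ y in a..b, k y| + |h b * ∫ y in a..b, k y| := by
        simpa using abs_sub_abs_le_abs_sub (∫ y in a..b, h y * k y) (h b * ∫ y in a..b, k y)
    _ ≤ M * C + M * C := add_le_add (hsub.trans (mul_le_mul_of_nonneg_right hosc hC)) hend
    _ = 2 * M * C := by ring

end Bonnet

theorem abs_integral_Ioi_le_of_abs_intervalIntegral_le {f : ℝ → ℝ} {a B : ℝ}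
    (hf : IntegrableOn f (Ioi a)) (hB : ∀ b, a ≤ b → |∫ y in a..b, f y| ≤ B) :
    |∫ y in Ioi a, f y| ≤ B :=
  le_of_tendsto (intervalIntegral_tendsto_integral_Ioi a hf Filter.tendsto_id).abs
    ((Filter.eventually_ge_atTop a).mono hB)

theorem abs_integral_Iic_le_of_abs_intervalIntegral_le {f : ℝ → ℝ} {b B : ℝ}
    (hf : IntegrableOn f (Iic b)) (hB : ∀ a, a ≤ b → |∫ y in a..b, f y| ≤ B) :
    |∫ y in Iic b, f y| ≤ B :=
  le_of_tendsto (intervalIntegral_tendsto_integral_Iic b hf Filter.tendsto_id).abs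
    ((Filter.eventually_le_atBot b).mono hB)

theorem integral_eq_integral_Iic_add_intervalIntegral_add_integral_Ioi {f : ℝ → ℝ}
    (hf : Integrable f) (a b : ℝ) :
    ∫ y, f y = (∫ y in Iic a, f y) + (∫ y in a..b, f y) + ∫ y in Ioi b, f y := by
  rw [← integral_Iic_add_Ioi hf.integrableOn hf.integrableOn (b := b),
    ← integral_Iic_sub_Iic hf.integrableOn hf.integrableOn]
  ring

theorem stmt16_general (g : ℝ → ℝ) (hmono : Monotone g ∨ Antitone g)
    (hpos : ∀ x, 0 < g x) (M : ℝ) (hM : ∀ x, g x ≤ M)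
    (k : ℝ → ℝ) (hk : LocallyIntegrable k (volume : Measure ℝ))
    (N : ℝ) (hN : 0 < N) (αN βN : ℝ)
    (hin : ∀ a b : ℝ, a ≤ b → -N ≤ a → b ≤ N → |∫ y in a..b, k y| ≤ αN)
    (hout : ∀ a b : ℝ, a ≤ b → (b ≤ -N ∨ N ≤ a) → |∫ y in a..b, k y| ≤ βN)
    (hconv : ∀ x : ℝ, Integrable (fun y => g (x - y) * k y) volume) :
    ∀ x : ℝ,
      |(∫ y, g (x - y) * k y) - (∫ y in (-N)..N, k y) * g (x - N)| ≤
        |g (x + N) - g (x - N)| * αN + 4 * M * βN := by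
  intro x
  set h : ℝ → ℝ := fun y => g (x - y)
  have hxsub : Antitone (fun y : ℝ => x - y) := fun _ _ huv => sub_le_sub_left huv x
  have hh : Monotone h ∨ Antitone h :=
    hmono.symm.imp (fun hg => hg.comp hxsub) (fun hg => hg.comp_antitone hxsub)
  have h0 : ∀ y, 0 ≤ h y := fun y => (hpos _).le
  have hhM : ∀ y, h y ≤ M := fun y => hM _
  have hkI : ∀ a b, IntervalIntegrable k volume a b := fun a b =>
    (hk.integrableOn_isCompact isCompact_uIcc).intervalIntegrable
  have hleft : |∫ y in Iic (-N), h y * k y| ≤ 2 * M * βN :=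
    abs_integral_Iic_le_of_abs_intervalIntegral_le (hconv x).integrableOn fun a ha =>
      abs_intervalIntegral_mul_le_two_mul hh h0 hhM ha (hkI _ _) fun c hc =>
        hout a c hc.1 (Or.inl hc.2)
  have hright : |∫ y in Ioi N, h y * k y| ≤ 2 * M * βN :=
    abs_integral_Ioi_le_of_abs_intervalIntegral_le (hconv x).integrableOn fun b hb =>
      abs_intervalIntegral_mul_le_two_mul hh h0 hhM hb (hkI _ _) fun c hc =>
        hout N c hc.1 (Or.inr le_rfl)
  have hmid : |(∫ y in (-N)..N, h y * k y) - h N * ∫ y in (-N)..N, k y| ≤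
      |g (x + N) - g (x - N)| * αN := by
    simpa [h] using abs_intervalIntegral_mul_sub_le_of_monotone_or_antitone hh (by linarith)
      (hkI _ _) fun c hc => hin (-N) c hc.1 le_rfl hc.2
  rw [integral_eq_integral_Iic_add_intervalIntegral_add_integral_Ioi (hconv x) (-N) N]
  calc _ = |((∫ y in (-N)..N, h y * k y) - h N * ∫ y in (-N)..N, k y) +
          (∫ y in Iic (-N), h y * k y) + ∫ y in Ioi N, h y * k y| := by congr 1; ring
    _ ≤ |g (x + N) - g (x - N)| * αN + 4 * M * βN := (abs_add_three _ _ _).trans (by linarith)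

theorem stmt16 (g : ℝ → ℝ) (hmono : Monotone g ∨ Antitone g)
    (hpos : ∀ x, 0 < g x) (M : ℝ) (hM : ∀ x, g x ≤ M)
    (k : ℝ → ℝ) (hk : LocallyIntegrable k (volume : Measure ℝ))
    (N : ℝ) (hN : 0 < N) (αN βN : ℝ) (hαN : 0 < αN) (hβN : 0 < βN)
    (hin : ∀ a b : ℝ, a ≤ b → -N ≤ a → b ≤ N → |∫ y in a..b, k y| ≤ αN)
    (hout : ∀ a b : ℝ, a ≤ b → (b ≤ -N ∨ N ≤ a) → |∫ y in a..b, k y| ≤ βN)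
    (hconv : ∀ x : ℝ, Integrable (fun y => g (x - y) * k y) volume) :
    ∀ x : ℝ,
      |(∫ y, g (x - y) * k y) - (∫ y in (-N)..N, k y) * g (x - N)| ≤
        |g (x + N) - g (x - N)| * αN + 4 * M * βN :=
  stmt16_general g hmono hpos M hM k hk N hN αN βN hin hout hconv
end

section
/- For every interval I ⊆ R of positive length, the functional L^2(I, C) → R, f ↦ ‖f ⋆ f‖_{L^2}, is not coercive: there exists a sequence (f_n) in L^2(I, C) with ‖f_n‖_{L^2} → ∞ while ‖f_n ⋆ f_n‖_{L^2} stays bounded. -/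
open MeasureTheory Complex Filter

/-- Autocorrelation on `ℝ`: `(f ⋆ f)(x) = ∫ f*(y) f(x+y) dy`. -/
noncomputable def autocorr (f : ℝ → ℂ) (x : ℝ) : ℂ :=
  ∫ y, (starRingEnd ℂ) (f y) * f (x + y)

/-!
Take chirps `f(x) = A e^{iωx²}` on `[a, b]`, of length `L = b - a`. Since
`conj (f y) * f (x + y) = A² e^{iωx²} e^{2iωxy}`, the value `(f ⋆ f)(x)` is `A²` times an
oscillatory integral over a subinterval of `[a, b]`, which is bounded both by `L` and by
`1 / |ωx|`. Hence `|(f ⋆ f)(x)|² ≤ 2A⁴L² / (1 + (ωLx)²)`, whose integral is `2πA⁴L / |ω|`.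
With `A = N` and `ω = N⁴` this stays equal to `2πL`, while `‖f‖_{L²} = N √L → ∞`.
-/

open Set
open scoped Real

lemma norm_setIntegral_Icc_cexp_mul_I_le (k c d : ℝ) :
    ‖∫ y in Icc c d, cexp (↑(k * y) * I)‖ ≤ volume.real (Icc c d) := by
  simpa using norm_setIntegral_le_of_norm_le_const (C := 1) (μ := volume) measure_Icc_lt_top
    (fun y _ => (norm_exp_ofReal_mul_I (k * y)).le)

lemma norm_setIntegral_Icc_cexp_mul_I_mul_abs_le (k c d : ℝ) :
    ‖∫ y in Icc c d, cexp (↑(k * y) * I)‖ * |k| ≤ 2 := by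
  rcases eq_or_ne k 0 with rfl | hk
  · simp
  rcases lt_or_ge d c with hdc | hcd
  · simp [Icc_eq_empty_of_lt hdc]
  have hkI : (k : ℂ) * I ≠ 0 := by simp [hk]
  have hprim : ∫ y in Icc c d, cexp (↑(k * y) * I) =
      (cexp (↑(k * d) * I) - cexp (↑(k * c) * I)) / (k * I) := by
    rw [integral_Icc_eq_integral_Ioc, ← intervalIntegral.integral_of_le hcd]
    have := integral_exp_mul_complex (a := c) (b := d) hkI
    push_cast at this ⊢
    simpa only [mul_right_comm _ I] using this
  have hden : ‖(k : ℂ) * I‖ = |k| := by simp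
  rw [hprim, norm_div, hden, div_mul_cancel₀ _ (abs_ne_zero.2 hk)]
  calc _ ≤ ‖cexp (↑(k * d) * I)‖ + ‖cexp (↑(k * c) * I)‖ := norm_sub_le _ _
    _ = 2 := by rw [norm_exp_ofReal_mul_I, norm_exp_ofReal_mul_I]; norm_num

lemma integral_inv_one_add_mul_sq (c : ℝ) : ∫ x, (1 + (c * x) ^ 2)⁻¹ = π / |c| := by
  rw [Measure.integral_comp_mul_left (fun x => (1 + x ^ 2)⁻¹), integral_univ_inv_one_add_sq,
    abs_inv, smul_eq_mul, inv_mul_eq_div]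

lemma eLpNorm_two_le_sqrt_integral {α E : Type*} [MeasurableSpace α] [NormedAddCommGroup E]
    {μ : Measure α} {f : α → E} {g : α → ℝ} (hg : Integrable g μ)
    (hfg : ∀ᵐ x ∂μ, ‖f x‖ ^ 2 ≤ g x) :
    eLpNorm f 2 μ ≤ ENNReal.ofReal √(∫ x, g x ∂μ) := by
  have hg0 : 0 ≤ᵐ[μ] g := hfg.mono fun x hx => (sq_nonneg _).trans hx
  rw [eLpNorm_eq_lintegral_rpow_enorm_toReal two_ne_zero ENNReal.ofNat_ne_top,
    ENNReal.toReal_ofNat, Real.sqrt_eq_rpow,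
    ← ENNReal.ofReal_rpow_of_nonneg (integral_nonneg_of_ae hg0) (by norm_num),
    ofReal_integral_eq_lintegral_ofReal hg hg0]
  gcongr ?_ ^ _
  refine lintegral_mono_ae (hfg.mono fun x hx => ?_)
  rw [← ofReal_norm, ENNReal.ofReal_rpow_of_nonneg (norm_nonneg _) zero_le_two, Real.rpow_two]
  exact ENNReal.ofReal_le_ofReal hx

section Chirp

variable (A ω a b : ℝ)

noncomputable def chirp : ℝ → ℂ :=
  (Icc a b).indicator fun x => A * cexp (↑(ω * x ^ 2) * I)

lemma norm_chirp (x : ℝ) : ‖chirp A ω a b x‖ = ‖(Icc a b).indicator (fun _ => A) x‖ := by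
  by_cases hx : x ∈ Icc a b
  · simp only [chirp, indicator_of_mem hx, norm_mul, norm_exp_ofReal_mul_I, mul_one, norm_real]
  · simp [chirp, hx]

lemma eLpNorm_chirp (p : ENNReal) :
    eLpNorm (chirp A ω a b) p volume = eLpNorm ((Icc a b).indicator fun _ => A) p volume :=
  eLpNorm_congr_norm_ae (.of_forall (norm_chirp A ω a b))

lemma memLp_chirp (p : ENNReal) : MemLp (chirp A ω a b) p volume := by
  refine (memLp_indicator_iff_restrict measurableSet_Icc).2 (.of_bound ?_ |A| (.of_forall ?_))
  · exact (by fun_prop : Continuous fun x : ℝ => A * cexp (↑(ω * x ^ 2) * I)).aestronglyMeasurable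
  · intro x
    rw [norm_mul, norm_exp_ofReal_mul_I, mul_one, norm_real, Real.norm_eq_abs]

lemma eLpNorm_two_chirp_toReal (hab : a ≤ b) :
    (eLpNorm (chirp A ω a b) 2 volume).toReal = |A| * √(b - a) := by
  rw [eLpNorm_chirp, eLpNorm_indicator_const measurableSet_Icc two_ne_zero ENNReal.ofNat_ne_top,
    Real.volume_Icc, ENNReal.toReal_mul, ← ENNReal.toReal_rpow, ENNReal.toReal_ofReal (by linarith),
    Real.sqrt_eq_rpow]
  simp

lemma conj_chirp_mul_chirp_add (x y : ℝ) :
    (starRingEnd ℂ) (chirp A ω a b y) * chirp A ω a b (x + y) =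
      (Icc a b ∩ Icc (a - x) (b - x)).indicator
        (fun y => ↑(A ^ 2) * cexp (↑(ω * x ^ 2) * I) * cexp (↑(2 * ω * x * y) * I)) y := by
  by_cases hy : y ∈ Icc a b
  · by_cases hxy : x + y ∈ Icc a b
    · have hy' : y ∈ Icc a b ∩ Icc (a - x) (b - x) :=
        ⟨hy, by constructor <;> linarith [hxy.1, hxy.2]⟩
      simp only [chirp, indicator_of_mem hy, indicator_of_mem hxy, indicator_of_mem hy']
      rw [map_mul, conj_ofReal, ← Complex.exp_conj, map_mul, conj_ofReal, conj_I,
        mul_mul_mul_comm, ← Complex.exp_add, mul_assoc ((A ^ 2 : ℝ) : ℂ), ← Complex.exp_add]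
      push_cast
      ring_nf
    · have hy' : y ∉ Icc a b ∩ Icc (a - x) (b - x) := fun h =>
        hxy ⟨by linarith [h.2.1], by linarith [h.2.2]⟩
      simp [chirp, hxy, hy']
  · have hy' : y ∉ Icc a b ∩ Icc (a - x) (b - x) := fun h => hy h.1
    simp [chirp, hy, hy']

lemma autocorr_chirp (x : ℝ) :
    autocorr (chirp A ω a b) x = ↑(A ^ 2) * cexp (↑(ω * x ^ 2) * I) *
      ∫ y in Icc (a ⊔ (a - x)) (b ⊓ (b - x)), cexp (↑(2 * ω * x * y) * I) := by
  simp only [autocorr, conj_chirp_mul_chirp_add]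
  rw [integral_indicator (measurableSet_Icc.inter measurableSet_Icc), Icc_inter_Icc,
    integral_const_mul]

lemma sq_norm_autocorr_chirp_le (hab : a ≤ b) (x : ℝ) :
    ‖autocorr (chirp A ω a b) x‖ ^ 2 ≤ 2 * A ^ 4 * (b - a) ^ 2 / (1 + (ω * (b - a) * x) ^ 2) := by
  set J := ‖∫ y in Icc (a ⊔ (a - x)) (b ⊓ (b - x)), cexp (↑(2 * ω * x * y) * I)‖
  have hJ0 : 0 ≤ J := norm_nonneg _
  have hJL : J ≤ b - a := by
    refine (norm_setIntegral_Icc_cexp_mul_I_le _ _ _).trans ?_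
    rw [← Real.volume_real_Icc_of_le hab]
    exact measureReal_mono (Icc_subset_Icc le_sup_left inf_le_left) measure_Icc_lt_top.ne
  have hJx : J * |ω * x| ≤ 1 := by
    have := norm_setIntegral_Icc_cexp_mul_I_mul_abs_le (2 * ω * x) (a ⊔ (a - x)) (b ⊓ (b - x))
    have habs : |2 * ω * x| = 2 * |ω * x| := by rw [mul_assoc, abs_mul, abs_two]
    rw [habs] at this
    linarith
  have hkey : J ^ 2 * (1 + (ω * (b - a) * x) ^ 2) ≤ 2 * (b - a) ^ 2 := by
    have h1 : J ^ 2 ≤ (b - a) ^ 2 := pow_le_pow_left₀ hJ0 hJL 2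
    have h2 : (J * |ω * x|) ^ 2 ≤ 1 := pow_le_one₀ (by positivity) hJx
    have h3 : (ω * (b - a) * x) ^ 2 = |ω * x| ^ 2 * (b - a) ^ 2 := by rw [sq_abs]; ring
    nlinarith [sq_nonneg (b - a)]
  rw [autocorr_chirp, norm_mul, norm_mul, norm_exp_ofReal_mul_I, mul_one, norm_real,
    Real.norm_of_nonneg (sq_nonneg A), le_div_iff₀ (by positivity)]
  calc (A ^ 2 * J) ^ 2 * (1 + (ω * (b - a) * x) ^ 2)
      = A ^ 4 * (J ^ 2 * (1 + (ω * (b - a) * x) ^ 2)) := by ring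
    _ ≤ A ^ 4 * (2 * (b - a) ^ 2) := by gcongr
    _ = 2 * A ^ 4 * (b - a) ^ 2 := by ring

lemma eLpNorm_autocorr_chirp_le (hab : a < b) (hω : ω ≠ 0) :
    eLpNorm (autocorr (chirp A ω a b)) 2 volume ≤
      ENNReal.ofReal √(2 * π * A ^ 4 * (b - a) / |ω|) := by
  have hc : ω * (b - a) ≠ 0 := mul_ne_zero hω (sub_pos.2 hab).ne'
  have hint : ∫ x, 2 * A ^ 4 * (b - a) ^ 2 / (1 + (ω * (b - a) * x) ^ 2) =
      2 * π * A ^ 4 * (b - a) / |ω| := by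
    simp_rw [div_eq_mul_inv]
    rw [integral_const_mul, integral_inv_one_add_mul_sq, abs_mul, abs_of_pos (sub_pos.2 hab)]
    field_simp
  rw [← hint]
  refine eLpNorm_two_le_sqrt_integral ?_ (.of_forall (sq_norm_autocorr_chirp_le A ω a b hab.le))
  simp_rw [div_eq_mul_inv]
  exact (integrable_inv_one_add_sq.comp_mul_left' hc).const_mul _

end Chirp

/-- On any interval of positive length, `f ↦ ‖f ⋆ f‖_{L²}` is not coercive. -/
theorem stmt17 (a b : ℝ) (hab : a < b) :
    ∃ f : ℕ → ℝ → ℂ,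
      (∀ n, MemLp (f n) 2 (volume : Measure ℝ) ∧ ∀ x, x ∉ Set.Icc a b → f n x = 0) ∧
      Tendsto (fun n => (eLpNorm (f n) 2 volume).toReal) atTop atTop ∧
      ∃ C : ℝ, ∀ n, (eLpNorm (autocorr (f n)) 2 volume).toReal ≤ C := by
  refine ⟨fun n => chirp (n + 1) ((n + 1) ^ 4) a b,
    fun n => ⟨memLp_chirp _ _ _ _ _, fun x hx => indicator_of_notMem hx _⟩, ?_,
    √(2 * π * (b - a)), fun n => ?_⟩
  · have habs (n : ℕ) : |(n : ℝ) + 1| = n + 1 := abs_of_pos n.cast_add_one_pos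
    simp_rw [eLpNorm_two_chirp_toReal _ _ _ _ hab.le, habs]
    exact (tendsto_natCast_atTop_atTop.atTop_add tendsto_const_nhds).atTop_mul_const
      (Real.sqrt_pos.2 (sub_pos.2 hab))
  · have hN : (0 : ℝ) < (n + 1) ^ 4 := by positivity
    have hconst : 2 * π * (n + 1) ^ 4 * (b - a) / |((n : ℝ) + 1) ^ 4| = 2 * π * (b - a) := by
      rw [abs_of_pos hN]
      field_simp
    have hbound := eLpNorm_autocorr_chirp_le (n + 1) _ a b hab hN.ne'
    rw [hconst] at hbound
    exact ENNReal.toReal_le_of_le_ofReal (Real.sqrt_nonneg _) hbound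
end
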